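/- arXiv:math/9905016 — 2 statements merged into one kernel-verified Lean document; each statement's English description precedes it below -/
import Mathlib

section
/- Let φ : ℳ → P(ℕ)/fin be a Boolean-algebra embedding, A ⊆ ℕ, and f, g ∈ ω^ω with f ≤* g. If there is a lifting Φ_g of φ such that Φ_g(O) = Φ_g[O] for all O ⊆ B_{g,A} and Φ_g(n,s) ∩ Φ_g(m,t) = ∅ whenever the basic sets {n} × [s] and {m} × [t] are disjoint, then there is a lifting Φ_f of φ such that Φ_f(O) = Φ_f[O] for all O ⊆ B_{f,A} and Φ_f(n,s) ∩ Φ_f(m,t) = ∅ whenever {n} × [s] and {m} × [t] are disjoint. -/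
open Set MeasureTheory
open scoped ENNReal

namespace Paper

/-- `X` and `Y` agree modulo a finite set. -/
def AlmostEq {α : Type} (X Y : Set α) : Prop := (symmDiff X Y).Finite

/-- the "equal mod finite" setoid on `Set α` -/
def finSetoid (α : Type) : Setoid (Set α) where
  r X Y := (symmDiff X Y).Finite
  iseqv := by
    constructor
    · intro X; simp
    · intro X Y h; rwa [symmDiff_comm]
    · intro X Y Z h1 h2
      exact (h1.union h2).subset (symmDiff_triangle X Y Z)

/-- the quotient Boolean algebra `P(α)/fin` -/
def PFin (α : Type) : Type := Quotient (finSetoid α)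

/-- the class of `X` in `P(α)/fin` -/
def PFin.mk {α : Type} (X : Set α) : PFin α := Quotient.mk (finSetoid α) X

/-- join in `P(α)/fin` -/
def PFin.sup {α : Type} : PFin α → PFin α → PFin α :=
  Quotient.lift₂ (fun X Y => PFin.mk (X ∪ Y))
    (by
      intro X Y X' Y' hX hY
      refine Quotient.sound ?_
      have hX' : (symmDiff X X').Finite := hX
      have hY' : (symmDiff Y Y').Finite := hY
      show (symmDiff (X ∪ Y) (X' ∪ Y')).Finite
      refine (hX'.union hY').subset ?_
      intro x hx
      simp only [Set.mem_symmDiff, Set.mem_union] at hx ⊢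
      tauto)

/-- meet in `P(α)/fin` -/
def PFin.inf {α : Type} : PFin α → PFin α → PFin α :=
  Quotient.lift₂ (fun X Y => PFin.mk (X ∩ Y))
    (by
      intro X Y X' Y' hX hY
      refine Quotient.sound ?_
      have hX' : (symmDiff X X').Finite := hX
      have hY' : (symmDiff Y Y').Finite := hY
      show (symmDiff (X ∩ Y) (X' ∩ Y')).Finite
      refine (hX'.union hY').subset ?_
      intro x hx
      simp only [Set.mem_symmDiff, Set.mem_inter_iff, Set.mem_union] at hx ⊢
      tauto)

/-- complement in `P(α)/fin` -/
def PFin.compl {α : Type} : PFin α → PFin α :=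
  Quotient.lift (fun X => PFin.mk Xᶜ)
    (by
      intro X Y h
      refine Quotient.sound ?_
      have h' : (symmDiff X Y).Finite := h
      show (symmDiff Xᶜ Yᶜ).Finite
      have e : symmDiff Xᶜ Yᶜ = symmDiff X Y := by
        ext x; simp only [Set.mem_symmDiff, Set.mem_compl_iff]; tauto
      rw [e]; exact h')

/-- bottom of `P(α)/fin` -/
def PFin.bot {α : Type} : PFin α := PFin.mk (∅ : Set α)

/-- top of `P(α)/fin` -/
def PFin.top {α : Type} : PFin α := PFin.mk (Set.univ : Set α)

/-- the Cantor set `2^ω` -/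
abbrev Cant : Type := ℕ → Bool

/-- the space `C = ω × 2^ω` -/
abbrev CSp : Type := ℕ × Cant

/-- the cylinder set `[s] = {x : s ⊂ x}` determined by a finite binary sequence -/
def cyl (s : List Bool) : Set Cant := {x | ∀ i : Fin s.length, x i.1 = s.get i}

/-- the basic clopen set `{n} × [s]` of `C` -/
def basic (n : ℕ) (s : List Bool) : Set CSp := {n} ×ˢ cyl s

lemma measurableSet_cyl (s : List Bool) : MeasurableSet (cyl s) := by
  have h : cyl s = ⋂ i : Fin s.length, (fun x : Cant => x i.1) ⁻¹' {s.get i} := by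
    ext x; simp [cyl]
  rw [h]
  exact MeasurableSet.iInter fun i => (measurable_pi_apply i.1) (measurableSet_singleton _)

lemma measurableSet_basic (n : ℕ) (s : List Bool) : MeasurableSet (basic n s) :=
  (measurableSet_singleton n).prod (measurableSet_cyl s)

/-- a measure on `C` is the right one when it gives each basic set `{n} × [s]`
measure `2^{-|s|}` (this determines the measure on all Borel sets). -/
def IsMeasureOK (μ : Measure CSp) : Prop :=
  ∀ (n : ℕ) (s : List Bool), μ (basic n s) = (2 : ℝ≥0∞)⁻¹ ^ s.length

/-- Borel subsets of `C` -/
abbrev BSet : Type := {A : Set CSp // MeasurableSet A}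

/-- the "equal modulo a null set" setoid on Borel sets of `C` -/
def measSetoid (μ : Measure CSp) : Setoid BSet where
  r A B := μ (symmDiff (A : Set CSp) (B : Set CSp)) = 0
  iseqv := by
    constructor
    · intro A; simp
    · intro A B h; rwa [symmDiff_comm]
    · intro A B C h1 h2
      exact measure_mono_null (symmDiff_triangle (A : Set CSp) (B : Set CSp) (C : Set CSp))
        (measure_union_null h1 h2)

/-- the measure algebra `ℳ = Bor(C)/𝒩` -/
def MAlg (μ : Measure CSp) : Type := Quotient (measSetoid μ)

/-- the class of a Borel set in the measure algebra -/
def MAlg.mk (μ : Measure CSp) (A : BSet) : MAlg μ := Quotient.mk (measSetoid μ) A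

variable {μ : Measure CSp}

/-- join in the measure algebra -/
def MAlg.sup : MAlg μ → MAlg μ → MAlg μ :=
  Quotient.lift₂ (fun A B : BSet => MAlg.mk μ ⟨(A : Set CSp) ∪ (B : Set CSp), A.2.union B.2⟩)
    (by
      intro A B A' B' hA hB
      refine Quotient.sound ?_
      have hA' : μ (symmDiff (A : Set CSp) (A' : Set CSp)) = 0 := hA
      have hB' : μ (symmDiff (B : Set CSp) (B' : Set CSp)) = 0 := hB
      show μ (symmDiff ((A : Set CSp) ∪ (B : Set CSp)) ((A' : Set CSp) ∪ (B' : Set CSp))) = 0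
      refine measure_mono_null ?_ (measure_union_null hA' hB')
      intro x hx
      simp only [Set.mem_symmDiff, Set.mem_union] at hx ⊢
      tauto)

/-- meet in the measure algebra -/
def MAlg.inf : MAlg μ → MAlg μ → MAlg μ :=
  Quotient.lift₂ (fun A B : BSet => MAlg.mk μ ⟨(A : Set CSp) ∩ (B : Set CSp), A.2.inter B.2⟩)
    (by
      intro A B A' B' hA hB
      refine Quotient.sound ?_
      have hA' : μ (symmDiff (A : Set CSp) (A' : Set CSp)) = 0 := hA
      have hB' : μ (symmDiff (B : Set CSp) (B' : Set CSp)) = 0 := hB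
      show μ (symmDiff ((A : Set CSp) ∩ (B : Set CSp)) ((A' : Set CSp) ∩ (B' : Set CSp))) = 0
      refine measure_mono_null ?_ (measure_union_null hA' hB')
      intro x hx
      simp only [Set.mem_symmDiff, Set.mem_inter_iff, Set.mem_union] at hx ⊢
      tauto)

/-- complement in the measure algebra -/
def MAlg.compl : MAlg μ → MAlg μ :=
  Quotient.lift (fun A : BSet => MAlg.mk μ ⟨(A : Set CSp)ᶜ, A.2.compl⟩)
    (by
      intro A B h
      refine Quotient.sound ?_
      have h' : μ (symmDiff (A : Set CSp) (B : Set CSp)) = 0 := h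
      show μ (symmDiff (A : Set CSp)ᶜ (B : Set CSp)ᶜ) = 0
      have e : symmDiff (A : Set CSp)ᶜ (B : Set CSp)ᶜ = symmDiff (A : Set CSp) (B : Set CSp) := by
        ext x; simp only [Set.mem_symmDiff, Set.mem_compl_iff]; tauto
      rw [e]; exact h')

/-- bottom of the measure algebra -/
def MAlg.bot : MAlg μ := MAlg.mk μ ⟨∅, MeasurableSet.empty⟩

/-- top of the measure algebra -/
def MAlg.top : MAlg μ := MAlg.mk μ ⟨Set.univ, MeasurableSet.univ⟩

/-- `φ : ℳ → P(ℕ)/fin` is a Boolean-algebra embedding -/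
structure IsEmbedding (μ : Measure CSp) (φ : MAlg μ → PFin ℕ) : Prop where
  injective : Function.Injective φ
  map_sup : ∀ a b, φ (MAlg.sup a b) = PFin.sup (φ a) (φ b)
  map_inf : ∀ a b, φ (MAlg.inf a b) = PFin.inf (φ a) (φ b)
  map_compl : ∀ a, φ (MAlg.compl a) = PFin.compl (φ a)
  map_bot : φ MAlg.bot = PFin.bot
  map_top : φ MAlg.top = PFin.top

/-- the open subset of `C` coded by a set `O` of pairs `(n,s)` -/
def openSet (O : Set (ℕ × List Bool)) : Set CSp := ⋃ p ∈ O, basic p.1 p.2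

lemma measurableSet_openSet (O : Set (ℕ × List Bool)) : MeasurableSet (openSet O) :=
  MeasurableSet.biUnion O.to_countable fun p _ => measurableSet_basic p.1 p.2

/-- the element of the measure algebra coded by `O` -/
def classOf (μ : Measure CSp) (O : Set (ℕ × List Bool)) : MAlg μ :=
  MAlg.mk μ ⟨openSet O, measurableSet_openSet O⟩

/-- `Φ` is a lifting of `φ : ℳ → P(ℕ)/fin`: it chooses a representative of `φ a` for every `a` -/
def IsLifting {μ : Measure CSp} (φ : MAlg μ → PFin ℕ) (Φ : MAlg μ → Set ℕ) : Prop :=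
  ∀ a, PFin.mk (Φ a) = φ a

/-- `Φ(O)`: the value of `Φ` at the class of the open set coded by `O` -/
def PhiSet {μ : Measure CSp} (Φ : MAlg μ → Set ℕ) (O : Set (ℕ × List Bool)) : Set ℕ :=
  Φ (classOf μ O)

/-- `Φ(n,s)` -/
def PhiPt {μ : Measure CSp} (Φ : MAlg μ → Set ℕ) (n : ℕ) (s : List Bool) : Set ℕ :=
  Φ (classOf μ {(n, s)})

/-- `Φ[O] = ⋃ {Φ(n,s) : (n,s) ∈ O}` -/
def PhiUnion {μ : Measure CSp} (Φ : MAlg μ → Set ℕ) (O : Set (ℕ × List Bool)) : Set ℕ :=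
  ⋃ p ∈ O, PhiPt Φ p.1 p.2

/-- the layer `B_f = {(n,s) : s ∈ 2^{f(n)}}` -/
def Bf (f : ℕ → ℕ) : Set (ℕ × List Bool) := {p | p.2.length = f p.1}

/-- the layer `B_{f,A} = {(n,s) : n ∈ A, s ∈ 2^{f(n)}}` -/
def BfA (f : ℕ → ℕ) (A : Set ℕ) : Set (ℕ × List Bool) := {p | p.1 ∈ A ∧ p.2.length = f p.1}

/-!
`Φ_f` agrees with `Φ_g` except at classes of open sets coded by some `O ⊆ B_{f,A}`, where it
is `Φ_g[O]`; such a code is unique, because distinct codes of one layer are disjoint basic sets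
of positive measure. Where `f ≤ g`, refining every code of `O` to layer `g` turns `Φ_g[O]` into
`Φ_g(O)` by the hypothesis on `B_{g,A}`; the remaining codes, where `f > g`, are finitely many,
and on a finite union `Φ_g[O]` represents `φ(O)` because `φ` preserves finite joins.
Disjointness survives because every value of `Φ_f` at a basic set is `Φ_g[O]` for a code `O` of
the same class, and basic sets meeting in a null set are disjoint.
-/

def initSeg (x : Cant) (k : ℕ) : List Bool := List.ofFn fun i : Fin k => x i

@[simp] lemma length_initSeg (x : Cant) (k : ℕ) : (initSeg x k).length = k := by
  simp [initSeg]

lemma mem_cyl_iff {x : Cant} {s : List Bool} : x ∈ cyl s ↔ initSeg x s.length = s := by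
  constructor
  · intro hx
    refine List.ext_getElem (by simp) fun i _ hi => ?_
    simpa [initSeg] using hx ⟨i, hi⟩
  · rintro hx ⟨i, hi⟩
    simp only [List.get_eq_getElem]
    rw [List.getElem_of_eq hx.symm]
    simp [initSeg]

lemma mem_cyl_initSeg (x : Cant) (k : ℕ) : x ∈ cyl (initSeg x k) := by
  rw [mem_cyl_iff, length_initSeg]

lemma initSeg_take {x : Cant} {s : List Bool} {k : ℕ} (hx : x ∈ cyl s) (hk : s.length ≤ k) :
    (initSeg x k).take s.length = s := by
  rw [← mem_cyl_iff.mp hx]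
  refine List.ext_getElem (by simp [hk]) fun i _ hi => ?_
  simp [initSeg]

lemma cyl_initSeg_subset {x : Cant} {s : List Bool} {k : ℕ} (hx : x ∈ cyl s)
    (hk : s.length ≤ k) : cyl (initSeg x k) ⊆ cyl s := fun y hy i => by
  rw [← hx i]
  simpa [initSeg] using hy ⟨i, by simp; omega⟩

lemma cyl_subset_cyl_take (s : List Bool) (k : ℕ) : cyl s ⊆ cyl (s.take k) := fun x hx i => by
  rw [hx ⟨i, by have := i.2; simp at this; omega⟩]
  simp

lemma PFin.mk_union {α : Type} (X Y : Set α) :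
    PFin.mk (X ∪ Y) = PFin.sup (PFin.mk X) (PFin.mk Y) := rfl

section Codes

variable {μ : Measure CSp}

lemma measure_basic_ne_zero (hμ : IsMeasureOK μ) (n : ℕ) (s : List Bool) :
    μ (basic n s) ≠ 0 := by
  rw [hμ]
  exact pow_ne_zero _ (ENNReal.inv_ne_zero.mpr ENNReal.ofNat_ne_top)

lemma basic_inter_eq_empty_of_measure_eq_zero (hμ : IsMeasureOK μ) {n m : ℕ} {s t : List Bool}
    (h : μ (basic n s ∩ basic m t) = 0) : basic n s ∩ basic m t = ∅ := by
  by_contra hne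
  obtain ⟨x, hxs, hxt⟩ := Set.nonempty_iff_ne_empty.mpr hne
  have hsub : basic x.1 (initSeg x.2 (max s.length t.length)) ⊆ basic n s ∩ basic m t := by
    rintro ⟨k, y⟩ ⟨hk, hy⟩
    exact ⟨⟨hk.trans hxs.1, cyl_initSeg_subset hxs.2 (le_max_left _ _) hy⟩,
      ⟨hk.trans hxt.1, cyl_initSeg_subset hxt.2 (le_max_right _ _) hy⟩⟩
  exact measure_basic_ne_zero hμ _ _ (measure_mono_null hsub h)

lemma BfA_subset_Bf (f : ℕ → ℕ) (A : Set ℕ) : BfA f A ⊆ Bf f := fun _ hp => hp.2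

lemma basic_inter_eq_empty_of_mem_Bf {f : ℕ → ℕ} {p q : ℕ × List Bool} (hp : p ∈ Bf f)
    (hq : q ∈ Bf f) (hne : p ≠ q) : basic p.1 p.2 ∩ basic q.1 q.2 = ∅ := by
  refine Set.eq_empty_iff_forall_notMem.mpr fun x ⟨hxp, hxq⟩ => hne ?_
  have hfst : p.1 = q.1 := hxp.1.symm.trans hxq.1
  refine Prod.ext hfst ?_
  rw [← mem_cyl_iff.mp hxp.2, ← mem_cyl_iff.mp hxq.2, hp, hq, hfst]

lemma openSet_singleton (p : ℕ × List Bool) : openSet {p} = basic p.1 p.2 := by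
  simp [openSet]

lemma basic_subset_openSet {p : ℕ × List Bool} {O : Set (ℕ × List Bool)} (hp : p ∈ O) :
    basic p.1 p.2 ⊆ openSet O :=
  Set.subset_biUnion_of_mem (u := fun q : ℕ × List Bool => basic q.1 q.2) hp

lemma classOf_eq_classOf_iff {O₁ O₂ : Set (ℕ × List Bool)} :
    classOf μ O₁ = classOf μ O₂ ↔ openSet O₁ =ᵐ[μ] openSet O₂ :=
  Quotient.eq.trans measure_symmDiff_eq_zero_iff

lemma classOf_congr {O₁ O₂ : Set (ℕ × List Bool)} (h : openSet O₁ = openSet O₂) :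
    classOf μ O₁ = classOf μ O₂ :=
  congrArg (MAlg.mk μ) (Subtype.ext h)

lemma classOf_union (O₁ O₂ : Set (ℕ × List Bool)) :
    classOf μ (O₁ ∪ O₂) = MAlg.sup (classOf μ O₁) (classOf μ O₂) :=
  congrArg (MAlg.mk μ) (Subtype.ext (Set.biUnion_union O₁ O₂ _))

lemma classOf_empty : classOf μ (∅ : Set (ℕ × List Bool)) = MAlg.bot :=
  congrArg (MAlg.mk μ) (Subtype.ext (Set.biUnion_empty _))

lemma subset_of_classOf_eq (hμ : IsMeasureOK μ) {f : ℕ → ℕ} {P Q : Set (ℕ × List Bool)}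
    (hP : P ⊆ Bf f) (hQ : Q ⊆ Bf f) (h : classOf μ P = classOf μ Q) : P ⊆ Q := by
  intro p hp
  by_contra hpQ
  have hsub : basic p.1 p.2 ⊆ openSet P \ openSet Q := by
    refine fun x hx => ⟨basic_subset_openSet hp hx, fun hxQ => ?_⟩
    obtain ⟨q, hq, hxq⟩ := Set.mem_iUnion₂.mp hxQ
    have hpq : p ≠ q := by rintro rfl; exact hpQ hq
    exact (basic_inter_eq_empty_of_mem_Bf (hP hp) (hQ hq) hpq).subset ⟨hx, hxq⟩
  exact measure_basic_ne_zero hμ _ _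
    (measure_mono_null hsub (ae_eq_set.mp (classOf_eq_classOf_iff.mp h)).1)

lemma eq_of_classOf_eq (hμ : IsMeasureOK μ) {f : ℕ → ℕ} {P Q : Set (ℕ × List Bool)}
    (hP : P ⊆ Bf f) (hQ : Q ⊆ Bf f) (h : classOf μ P = classOf μ Q) : P = Q :=
  (subset_of_classOf_eq hμ hP hQ h).antisymm (subset_of_classOf_eq hμ hQ hP h.symm)

lemma PhiUnion_singleton (Φ : MAlg μ → Set ℕ) (p : ℕ × List Bool) :
    PhiUnion Φ {p} = PhiPt Φ p.1 p.2 := by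
  simp [PhiUnion]

lemma PhiUnion_union (Φ : MAlg μ → Set ℕ) (O₁ O₂ : Set (ℕ × List Bool)) :
    PhiUnion Φ (O₁ ∪ O₂) = PhiUnion Φ O₁ ∪ PhiUnion Φ O₂ :=
  Set.biUnion_union O₁ O₂ _

lemma PhiUnion_biUnion (Φ : MAlg μ → Set ℕ) {ι : Type} (I : Set ι)
    (K : ι → Set (ℕ × List Bool)) : PhiUnion Φ (⋃ i ∈ I, K i) = ⋃ i ∈ I, PhiUnion Φ (K i) := by
  simp only [PhiUnion, Set.biUnion_iUnion]

end Codes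

def refinement (f g : ℕ → ℕ) (O : Set (ℕ × List Bool)) : Set (ℕ × List Bool) :=
  {q | q.2.length = g q.1 ∧ (q.1, q.2.take (f q.1)) ∈ O}

lemma refinement_subset_BfA {f g : ℕ → ℕ} {A : Set ℕ} {O : Set (ℕ × List Bool)}
    (hO : O ⊆ BfA f A) : refinement f g O ⊆ BfA g A := fun _ hq => ⟨(hO hq.2).1, hq.1⟩

lemma refinement_eq_biUnion (f g : ℕ → ℕ) (O : Set (ℕ × List Bool)) :
    refinement f g O = ⋃ p ∈ O, refinement f g {p} := by
  ext q
  simp [refinement]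

lemma openSet_refinement {f g : ℕ → ℕ} {O : Set (ℕ × List Bool)} (hO : O ⊆ Bf f)
    (hle : ∀ p ∈ O, f p.1 ≤ g p.1) : openSet (refinement f g O) = openSet O := by
  refine (Set.iUnion₂_subset fun q hq => ?_).antisymm
    (Set.iUnion₂_subset fun p hp => ?_)
  · exact (Set.prod_mono le_rfl (cyl_subset_cyl_take _ _)).trans (basic_subset_openSet hq.2)
  · rintro ⟨k, x⟩ ⟨hk, hx⟩
    have hlen : p.2.length ≤ g p.1 := (hO hp).symm ▸ hle p hp
    have hq : (p.1, initSeg x (g p.1)) ∈ refinement f g O := by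
      refine ⟨length_initSeg _ _, ?_⟩
      rw [← hO hp, initSeg_take hx hlen]
      exact hp
    exact basic_subset_openSet hq ⟨hk, mem_cyl_initSeg x _⟩

section Lifting

variable {μ : Measure CSp} {φ : MAlg μ → PFin ℕ} {f g : ℕ → ℕ} {A : Set ℕ}
  {Φ : MAlg μ → Set ℕ} {O : Set (ℕ × List Bool)}

lemma PhiSet_eq_PhiUnion_refinement (hcomp : ∀ O ⊆ BfA g A, PhiSet Φ O = PhiUnion Φ O)
    (hO : O ⊆ BfA f A) (hle : ∀ p ∈ O, f p.1 ≤ g p.1) :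
    PhiSet Φ O = PhiUnion Φ (refinement f g O) := by
  rw [← hcomp _ (refinement_subset_BfA hO), PhiSet, PhiSet,
    classOf_congr (openSet_refinement (hO.trans (BfA_subset_Bf f A)) hle)]

lemma PhiUnion_eq_PhiSet_of_le (hcomp : ∀ O ⊆ BfA g A, PhiSet Φ O = PhiUnion Φ O)
    (hO : O ⊆ BfA f A) (hle : ∀ p ∈ O, f p.1 ≤ g p.1) : PhiUnion Φ O = PhiSet Φ O :=
  calc PhiUnion Φ O = ⋃ p ∈ O, PhiUnion Φ (refinement f g {p}) :=
        Set.iUnion₂_congr fun p hp => PhiSet_eq_PhiUnion_refinement hcomp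
          (Set.singleton_subset_iff.mpr (hO hp)) (by simpa using hle p hp)
    _ = PhiUnion Φ (refinement f g O) := by rw [refinement_eq_biUnion f g O, PhiUnion_biUnion]
    _ = PhiSet Φ O := (PhiSet_eq_PhiUnion_refinement hcomp hO hle).symm

lemma mk_PhiUnion_of_finite (hφ : IsEmbedding μ φ) (hlift : IsLifting φ Φ) (hO : O.Finite) :
    PFin.mk (PhiUnion Φ O) = φ (classOf μ O) := by
  induction O, hO using Set.Finite.induction_on with
  | empty => rw [classOf_empty, hφ.map_bot, PhiUnion, Set.biUnion_empty]; rfl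
  | @insert p O _ _ ih =>
    rw [← Set.singleton_union, PhiUnion_union, classOf_union, hφ.map_sup, PFin.mk_union, ih,
      PhiUnion_singleton]
    exact congrArg (PFin.sup · _) (hlift _)

lemma mk_PhiUnion_of_subset_BfA (hφ : IsEmbedding μ φ) (hfg : {n : ℕ | ¬ f n ≤ g n}.Finite)
    (hlift : IsLifting φ Φ) (hcomp : ∀ O ⊆ BfA g A, PhiSet Φ O = PhiUnion Φ O)
    (hO : O ⊆ BfA f A) : PFin.mk (PhiUnion Φ O) = φ (classOf μ O) := by
  set T : Set (ℕ × List Bool) := {p | f p.1 ≤ g p.1}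
  have hbad : (O \ T).Finite :=
    (hfg.biUnion fun n _ => (Set.finite_singleton n).prod (List.finite_length_eq Bool (f n)))
      |>.subset fun p hp => Set.mem_biUnion hp.2 ⟨rfl, (hO hp.1).2⟩
  have hgood : PhiUnion Φ (O ∩ T) = PhiSet Φ (O ∩ T) :=
    PhiUnion_eq_PhiSet_of_le hcomp (Set.inter_subset_left.trans hO) fun _ hp => hp.2
  rw [← Set.inter_union_sdiff O T, PhiUnion_union, classOf_union, hφ.map_sup, PFin.mk_union,
    hgood, mk_PhiUnion_of_finite hφ hlift hbad]
  exact congrArg (PFin.sup · _) (hlift _)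

open Classical in
noncomputable def layerLifting (f : ℕ → ℕ) (A : Set ℕ) (Φ : MAlg μ → Set ℕ) (a : MAlg μ) :
    Set ℕ :=
  if h : ∃ O ⊆ BfA f A, classOf μ O = a then PhiUnion Φ h.choose else Φ a

lemma layerLifting_classOf (hμ : IsMeasureOK μ) (hO : O ⊆ BfA f A) :
    layerLifting f A Φ (classOf μ O) = PhiUnion Φ O := by
  have h : ∃ O' ⊆ BfA f A, classOf μ O' = classOf μ O := ⟨O, hO, rfl⟩
  obtain ⟨hsub, hclass⟩ := h.choose_spec
  rw [layerLifting, dif_pos h, eq_of_classOf_eq hμ (hsub.trans (BfA_subset_Bf f A))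
    (hO.trans (BfA_subset_Bf f A)) hclass]

lemma isLifting_layerLifting (hφ : IsEmbedding μ φ) (hfg : {n : ℕ | ¬ f n ≤ g n}.Finite)
    (hlift : IsLifting φ Φ) (hcomp : ∀ O ⊆ BfA g A, PhiSet Φ O = PhiUnion Φ O) :
    IsLifting φ (layerLifting f A Φ) := by
  intro a
  rw [layerLifting]
  split_ifs with h
  · obtain ⟨hsub, hclass⟩ := h.choose_spec
    rw [mk_PhiUnion_of_subset_BfA hφ hfg hlift hcomp hsub, hclass]
  · exact hlift a

lemma PhiSet_layerLifting (hμ : IsMeasureOK μ) (hO : O ⊆ BfA f A) :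
    PhiSet (layerLifting f A Φ) O = PhiUnion (layerLifting f A Φ) O := by
  refine (layerLifting_classOf hμ hO).trans (Set.iUnion₂_congr fun p hp => ?_)
  rw [← PhiUnion_singleton, PhiPt, layerLifting_classOf hμ (Set.singleton_subset_iff.mpr (hO hp))]

variable (f A Φ) in
lemma exists_PhiPt_layerLifting_eq_PhiUnion (n : ℕ) (s : List Bool) :
    ∃ O, classOf μ O = classOf μ {(n, s)} ∧
      PhiPt (layerLifting f A Φ) n s = PhiUnion Φ O := by
  rw [PhiPt, layerLifting]
  split_ifs with h
  · exact ⟨h.choose, h.choose_spec.2, rfl⟩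
  · exact ⟨{(n, s)}, rfl, (PhiUnion_singleton Φ (n, s)).symm⟩

lemma PhiUnion_inter_eq_empty (hμ : IsMeasureOK μ)
    (hdisj : ∀ (n : ℕ) (s : List Bool) (m : ℕ) (t : List Bool),
      basic n s ∩ basic m t = ∅ → PhiPt Φ n s ∩ PhiPt Φ m t = ∅)
    {O₁ O₂ : Set (ℕ × List Bool)} (h : μ (openSet O₁ ∩ openSet O₂) = 0) :
    PhiUnion Φ O₁ ∩ PhiUnion Φ O₂ = ∅ := by
  refine Set.eq_empty_iff_forall_notMem.mpr fun k ⟨hk₁, hk₂⟩ => ?_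
  obtain ⟨p, hp, hkp⟩ := Set.mem_iUnion₂.mp hk₁
  obtain ⟨q, hq, hkq⟩ := Set.mem_iUnion₂.mp hk₂
  have hpq : basic p.1 p.2 ∩ basic q.1 q.2 = ∅ := basic_inter_eq_empty_of_measure_eq_zero hμ
    (measure_mono_null (Set.inter_subset_inter (basic_subset_openSet hp)
      (basic_subset_openSet hq)) h)
  exact (hdisj _ _ _ _ hpq).subset ⟨hkp, hkq⟩

lemma PhiPt_layerLifting_inter_eq_empty (hμ : IsMeasureOK μ)
    (hdisj : ∀ (n : ℕ) (s : List Bool) (m : ℕ) (t : List Bool),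
      basic n s ∩ basic m t = ∅ → PhiPt Φ n s ∩ PhiPt Φ m t = ∅)
    {n m : ℕ} {s t : List Bool} (h : basic n s ∩ basic m t = ∅) :
    PhiPt (layerLifting f A Φ) n s ∩ PhiPt (layerLifting f A Φ) m t = ∅ := by
  obtain ⟨O₁, hclass₁, he₁⟩ := exists_PhiPt_layerLifting_eq_PhiUnion f A Φ n s
  obtain ⟨O₂, hclass₂, he₂⟩ := exists_PhiPt_layerLifting_eq_PhiUnion f A Φ m t
  rw [he₁, he₂]
  refine PhiUnion_inter_eq_empty hμ hdisj ?_
  have hae := (classOf_eq_classOf_iff.mp hclass₁).inter (classOf_eq_classOf_iff.mp hclass₂)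
  rw [measure_congr hae, openSet_singleton, openSet_singleton, h, measure_empty]

end Lifting

/-- good liftings for `g` give good liftings for `f` when `f ≤* g`. -/
theorem good_lifting_monotone
    (μ : Measure CSp) (hμ : IsMeasureOK μ)
    (φ : MAlg μ → PFin ℕ) (hφ : IsEmbedding μ φ)
    (A : Set ℕ) (f g : ℕ → ℕ) (hfg : {n : ℕ | ¬ f n ≤ g n}.Finite)
    (Φg : MAlg μ → Set ℕ) (hlift : IsLifting φ Φg)
    (hcomp : ∀ O ⊆ BfA g A, PhiSet Φg O = PhiUnion Φg O)
    (hdisj : ∀ (n : ℕ) (s : List Bool) (m : ℕ) (t : List Bool),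
      basic n s ∩ basic m t = ∅ → PhiPt Φg n s ∩ PhiPt Φg m t = ∅) :
    ∃ Φf : MAlg μ → Set ℕ, IsLifting φ Φf ∧
      (∀ O ⊆ BfA f A, PhiSet Φf O = PhiUnion Φf O) ∧
      (∀ (n : ℕ) (s : List Bool) (m : ℕ) (t : List Bool),
        basic n s ∩ basic m t = ∅ → PhiPt Φf n s ∩ PhiPt Φf m t = ∅) :=
  ⟨layerLifting f A Φg, isLifting_layerLifting hφ hfg hlift hcomp,
    fun _ hO => PhiSet_layerLifting hμ hO,
    fun _ _ _ _ h => PhiPt_layerLifting_inter_eq_empty hμ hdisj h⟩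

end Paper
end

section
/- There exist a Boolean subalgebra 𝕃 of the measure algebra ℳ with |𝕃| = ℵ₁, an element a ∈ ℳ ∖ 𝕃, and a Boolean-algebra embedding φ : 𝕃 → P(ℕ)/fin such that φ cannot be extended to a Boolean-algebra embedding into P(ℕ)/fin of the subalgebra of ℳ generated by 𝕃 ∪ {a}. In particular, the statement 'every embedding of a subalgebra of ℳ of size less than the continuum extends over one more element' is false for subalgebras of size ℵ₁. -/
open Set MeasureTheory
open scoped ENNReal

namespace Paper

/-- Borel subsets of the interval `(0,1]` -/
abbrev ISet : Type := {A : Set ℝ // MeasurableSet A ∧ A ⊆ Set.Ioc (0 : ℝ) 1}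

/-- the "equal modulo a Lebesgue-null set" setoid on Borel subsets of `(0,1]` -/
def measSetoidI : Setoid ISet where
  r A B := volume (symmDiff (A : Set ℝ) (B : Set ℝ)) = 0
  iseqv := by
    constructor
    · intro A; simp
    · intro A B h; rwa [symmDiff_comm]
    · intro A B C h1 h2
      exact measure_mono_null (symmDiff_triangle (A : Set ℝ) (B : Set ℝ) (C : Set ℝ))
        (measure_union_null h1 h2)

/-- the measure algebra `ℳ` of `(0,1]`: Borel sets modulo Lebesgue-null sets -/
def MAlgI : Type := Quotient measSetoidI

/-- the class of a Borel set in the measure algebra -/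
def MAlgI.mk (A : ISet) : MAlgI := Quotient.mk measSetoidI A

/-- join in the measure algebra -/
def MAlgI.sup : MAlgI → MAlgI → MAlgI :=
  Quotient.lift₂ (fun A B : ISet =>
      MAlgI.mk ⟨(A : Set ℝ) ∪ (B : Set ℝ), ⟨A.2.1.union B.2.1, Set.union_subset A.2.2 B.2.2⟩⟩)
    (by
      intro A B A' B' hA hB
      refine Quotient.sound ?_
      have hA' : volume (symmDiff (A : Set ℝ) (A' : Set ℝ)) = 0 := hA
      have hB' : volume (symmDiff (B : Set ℝ) (B' : Set ℝ)) = 0 := hB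
      show volume (symmDiff ((A : Set ℝ) ∪ (B : Set ℝ)) ((A' : Set ℝ) ∪ (B' : Set ℝ))) = 0
      refine measure_mono_null ?_ (measure_union_null hA' hB')
      intro x hx
      simp only [Set.mem_symmDiff, Set.mem_union] at hx ⊢
      tauto)

/-- meet in the measure algebra -/
def MAlgI.inf : MAlgI → MAlgI → MAlgI :=
  Quotient.lift₂ (fun A B : ISet =>
      MAlgI.mk ⟨(A : Set ℝ) ∩ (B : Set ℝ),
        ⟨A.2.1.inter B.2.1, fun x hx => A.2.2 hx.1⟩⟩)
    (by
      intro A B A' B' hA hB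
      refine Quotient.sound ?_
      have hA' : volume (symmDiff (A : Set ℝ) (A' : Set ℝ)) = 0 := hA
      have hB' : volume (symmDiff (B : Set ℝ) (B' : Set ℝ)) = 0 := hB
      show volume (symmDiff ((A : Set ℝ) ∩ (B : Set ℝ)) ((A' : Set ℝ) ∩ (B' : Set ℝ))) = 0
      refine measure_mono_null ?_ (measure_union_null hA' hB')
      intro x hx
      simp only [Set.mem_symmDiff, Set.mem_inter_iff, Set.mem_union] at hx ⊢
      tauto)

/-- complement (relative to `(0,1]`) in the measure algebra -/
def MAlgI.compl : MAlgI → MAlgI :=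
  Quotient.lift (fun A : ISet =>
      MAlgI.mk ⟨Set.Ioc (0 : ℝ) 1 \ (A : Set ℝ), ⟨measurableSet_Ioc.diff A.2.1, Set.diff_subset⟩⟩)
    (by
      intro A B h
      refine Quotient.sound ?_
      have h' : volume (symmDiff (A : Set ℝ) (B : Set ℝ)) = 0 := h
      show volume (symmDiff (Set.Ioc (0 : ℝ) 1 \ (A : Set ℝ)) (Set.Ioc (0 : ℝ) 1 \ (B : Set ℝ))) = 0
      refine measure_mono_null ?_ h'
      intro x hx
      simp only [Set.mem_symmDiff, Set.mem_diff] at hx ⊢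
      tauto)

/-- bottom of the measure algebra -/
def MAlgI.bot : MAlgI := MAlgI.mk ⟨∅, ⟨MeasurableSet.empty, Set.empty_subset _⟩⟩

/-- top of the measure algebra -/
def MAlgI.top : MAlgI := MAlgI.mk ⟨Set.Ioc (0 : ℝ) 1, ⟨measurableSet_Ioc, subset_rfl⟩⟩

/-- `L` is a Boolean subalgebra of the measure algebra -/
structure IsSubalgebra (L : Set MAlgI) : Prop where
  bot_mem : MAlgI.bot ∈ L
  top_mem : MAlgI.top ∈ L
  sup_mem : ∀ a ∈ L, ∀ b ∈ L, MAlgI.sup a b ∈ L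
  inf_mem : ∀ a ∈ L, ∀ b ∈ L, MAlgI.inf a b ∈ L
  compl_mem : ∀ a ∈ L, MAlgI.compl a ∈ L

/-- `φ` restricted to `L` is a Boolean-algebra embedding of `L` into `P(ℕ)/fin` -/
structure IsEmbeddingOn (L : Set MAlgI) (φ : MAlgI → PFin ℕ) : Prop where
  injOn : Set.InjOn φ L
  map_sup : ∀ a ∈ L, ∀ b ∈ L, φ (MAlgI.sup a b) = PFin.sup (φ a) (φ b)
  map_inf : ∀ a ∈ L, ∀ b ∈ L, φ (MAlgI.inf a b) = PFin.inf (φ a) (φ b)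
  map_compl : ∀ a ∈ L, φ (MAlgI.compl a) = PFin.compl (φ a)
  map_bot : φ MAlgI.bot = PFin.bot
  map_top : φ MAlgI.top = PFin.top

/-- the Boolean subalgebra of the measure algebra generated by `S` -/
def genBy (S : Set MAlgI) : Set MAlgI := ⋂₀ {T : Set MAlgI | IsSubalgebra T ∧ S ⊆ T}


/-! ### Development for the proof -/

noncomputable section
open Classical

/-! #### Quotient basics -/

lemma PFin.mk_eq_mk {α : Type} {X Y : Set α} :
    PFin.mk X = PFin.mk Y ↔ (symmDiff X Y).Finite :=
  ⟨fun h => Quotient.exact h, fun h => Quotient.sound h⟩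

lemma PFin.sup_mk {α : Type} (X Y : Set α) :
    PFin.sup (PFin.mk X) (PFin.mk Y) = PFin.mk (X ∪ Y) := rfl

lemma PFin.inf_mk {α : Type} (X Y : Set α) :
    PFin.inf (PFin.mk X) (PFin.mk Y) = PFin.mk (X ∩ Y) := rfl

lemma PFin.compl_mk {α : Type} (X : Set α) :
    PFin.compl (PFin.mk X) = PFin.mk Xᶜ := rfl

lemma MAlgI.mk_eq_mk {A B : ISet} :
    MAlgI.mk A = MAlgI.mk B ↔ volume (symmDiff (A : Set ℝ) (B : Set ℝ)) = 0 :=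
  ⟨fun h => Quotient.exact h, fun h => Quotient.sound h⟩

lemma ISet.ext {A B : ISet} (h : (A : Set ℝ) = (B : Set ℝ)) : A = B := Subtype.ext h

/-! #### Combinatorial families on ℕ -/

abbrev Code : Type := Finset ℕ × Finset (Finset ℕ)

/-- Fichtenholz–Kantorovich independent family on `Code`, indexed by `r : ℕ → Bool`. -/
def fkSet (r : ℕ → Bool) : Set Code := {z | z.1.filter (fun n => r n = true) ∈ z.2}

def encA (l : List Bool) : ℕ := 4 * Encodable.encode l
def encE (z : Code) : ℕ := 4 * Encodable.encode z + 1
def encF (z : Code) : ℕ := 4 * Encodable.encode z + 2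

lemma encA_inj : Function.Injective encA := fun l l' h => by
  unfold encA at h
  exact Encodable.encode_injective (by omega)

lemma encE_inj : Function.Injective encE := fun l l' h => by
  unfold encE at h
  exact Encodable.encode_injective (by omega)

lemma encF_inj : Function.Injective encF := fun l l' h => by
  unfold encF at h
  exact Encodable.encode_injective (by omega)

/-- the prefix of length `m` of the branch `r` -/
def pre (r : ℕ → Bool) (m : ℕ) : List Bool := (List.range m).map r

lemma pre_succ (r : ℕ → Bool) (m : ℕ) : pre r (m+1) = pre r m ++ [r m] := by
  simp [pre, List.range_succ]

lemma pre_length (r : ℕ → Bool) (m : ℕ) : (pre r m).length = m := by simp [pre]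

lemma pre_eq_iff {r s : ℕ → Bool} {m : ℕ} : pre r m = pre s m ↔ ∀ k < m, r k = s k := by
  constructor
  · intro h k hk
    have h1 := congrArg (fun l => l[k]?) h
    simpa [pre, List.getElem?_map, List.getElem?_range, hk] using h1
  · intro h
    apply List.ext_getElem (by simp [pre_length])
    intro k h1 h2
    simp only [pre, List.getElem_map, List.getElem_range]
    exact h k (by simpa [pre_length] using h1)

def Aset (r : ℕ → Bool) : Set ℕ := Set.range (fun m => encA (pre r m))
def Bset (r : ℕ → Bool) : Set ℕ := Set.range (fun m => encA (pre r m ++ [!r m]))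
def Eset (r : ℕ → Bool) : Set ℕ := encE '' fkSet r
def Fset (r : ℕ → Bool) : Set ℕ := encF '' fkSet r
def Dset (r : ℕ → Bool) : Set ℕ := Aset r ∪ Eset r
def Cset (r : ℕ → Bool) : Set ℕ := Bset r ∪ Fset r

lemma mod4_Aset {r n} (h : n ∈ Aset r) : n % 4 = 0 := by
  obtain ⟨m, rfl⟩ := h; simp [encA, Nat.mul_mod_right]
lemma mod4_Bset {r n} (h : n ∈ Bset r) : n % 4 = 0 := by
  obtain ⟨m, rfl⟩ := h; simp [encA, Nat.mul_mod_right]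
lemma mod4_Eset {r n} (h : n ∈ Eset r) : n % 4 = 1 := by
  obtain ⟨z, _, rfl⟩ := h; simp [encE, Nat.add_mod, Nat.mul_mod_right]
lemma mod4_Fset {r n} (h : n ∈ Fset r) : n % 4 = 2 := by
  obtain ⟨z, _, rfl⟩ := h; simp [encF, Nat.add_mod, Nat.mul_mod_right]

/-- where two branches first differ, in the canonical form used by `Bset` -/
def DiffAt (r s : ℕ → Bool) (n : ℕ) : Prop := (∀ k < n, r k = s k) ∧ r n = ! s n

lemma diffAt_unique {r s : ℕ → Bool} {n n' : ℕ} (h : DiffAt r s n) (h' : DiffAt r s n') :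
    n = n' := by
  by_contra hne
  rcases Nat.lt_or_ge n n' with hlt | hge
  · have h2 : s n = ! s n := (h'.1 n hlt).symm.trans h.2
    cases s n <;> simp_all
  · have hlt : n' < n := lt_of_le_of_ne hge (Ne.symm hne)
    have h2 : s n' = ! s n' := (h.1 n' hlt).symm.trans h'.2
    cases s n' <;> simp_all

lemma mem_AB_iff {r s : ℕ → Bool} {x : ℕ} :
    x ∈ Aset r ∩ Bset s ↔ ∃ n, DiffAt r s n ∧ x = encA (pre r (n+1)) := by
  constructor
  · rintro ⟨⟨m, rfl⟩, ⟨n, hn⟩⟩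
    have hl : pre r m = pre s n ++ [!s n] := encA_inj hn.symm
    have hm : m = n + 1 := by
      have := congrArg List.length hl
      simpa [pre_length] using this
    subst hm
    rw [pre_succ] at hl
    have h2 : pre r n = pre s n ∧ r n = !s n := by
      constructor
      · have := congrArg (fun l => l.take n) hl
        simpa [pre_length] using this
      · have := congrArg (fun l => l.getLast?) hl
        simpa using this
    exact ⟨n, ⟨pre_eq_iff.mp h2.1, h2.2⟩, rfl⟩
  · rintro ⟨n, ⟨hag, hbit⟩, rfl⟩
    refine ⟨⟨n+1, rfl⟩, ⟨n, ?_⟩⟩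
    show encA (pre s n ++ [!s n]) = encA (pre r (n+1))
    rw [pre_succ, ← hbit, pre_eq_iff.mpr fun k hk => (hag k hk).symm]

lemma AB_self (r : ℕ → Bool) : Aset r ∩ Bset r = ∅ := by
  ext x
  simp only [Set.mem_empty_iff_false, iff_false, mem_AB_iff]
  rintro ⟨n, ⟨_, hbit⟩, _⟩
  cases h : r n <;> rw [h] at hbit <;> simp_all

lemma AB_subsingleton (r s : ℕ → Bool) : (Aset r ∩ Bset s).Subsingleton := by
  intro x hx y hy
  rw [mem_AB_iff] at hx hy
  obtain ⟨n, hn, rfl⟩ := hx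
  obtain ⟨n', hn', rfl⟩ := hy
  rw [diffAt_unique hn hn']

lemma AB_nonempty {r s : ℕ → Bool} (h : r ≠ s) : (Aset r ∩ Bset s).Nonempty := by
  have hex : ∃ n, r n ≠ s n := Function.ne_iff.mp h
  let n₀ := Nat.find hex
  refine ⟨encA (pre r (n₀+1)), mem_AB_iff.mpr ⟨n₀, ⟨?_, ?_⟩, rfl⟩⟩
  · intro k hk
    have := Nat.find_min hex hk
    simpa using this
  · have := Nat.find_spec hex
    revert this
    cases r n₀ <;> cases s n₀ <;> simp


/-! #### FK independence -/

/-- a coordinate where two distinct branches differ -/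
def sep (r s : ℕ → Bool) : ℕ := if h : r = s then 0 else (Function.ne_iff.mp h).choose

lemma sep_spec {r s : ℕ → Bool} (h : r ≠ s) : r (sep r s) ≠ s (sep r s) := by
  rw [sep, dif_neg h]
  exact (Function.ne_iff.mp h).choose_spec

def goodCodes (Ps Ps' : Finset (ℕ → Bool)) : Set Code :=
  {z | (∀ r ∈ Ps, z ∈ fkSet r) ∧ ∀ s ∈ Ps', z ∉ fkSet s}

lemma filter_ne_of_sep {F : Finset ℕ} {r s : ℕ → Bool} (hr : r ≠ s) (hF : sep r s ∈ F) :
    F.filter (fun n => r n = true) ≠ F.filter (fun n => s n = true) := by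
  intro h
  have h1 : sep r s ∈ F.filter (fun n => r n = true) ↔
      sep r s ∈ F.filter (fun n => s n = true) := by rw [h]
  have := sep_spec hr
  simp only [Finset.mem_filter, hF, true_and] at h1
  cases hrv : r (sep r s) <;> cases hsv : s (sep r s) <;> simp_all

lemma goodCodes_infinite {Ps Ps' : Finset (ℕ → Bool)}
    (h : ∀ r ∈ Ps, ∀ s ∈ Ps', r ≠ s) : (goodCodes Ps Ps').Infinite := by
  classical
  -- the base separating finite set
  set F₀ : Finset ℕ := (Ps ×ˢ Ps').image (fun p => sep p.1 p.2) with hF₀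
  set M : ℕ := (F₀.sup id) + 1 with hM
  have hMnotin : ∀ k, M + k ∉ F₀ := by
    intro k hk
    have := Finset.le_sup (f := id) hk
    simp only [id] at this
    omega
  set Fk : ℕ → Finset ℕ := fun k => insert (M + k) F₀ with hFk
  have hFkinj : Function.Injective Fk := by
    intro k k' h
    by_contra hne
    have h1 : M + k ∈ Fk k' := h ▸ Finset.mem_insert_self _ _
    rcases Finset.mem_insert.mp h1 with h2 | h2
    · omega
    · exact hMnotin k h2
  set zk : ℕ → Code := fun k => (Fk k, Ps.image (fun r => (Fk k).filter (fun n => r n = true)))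
    with hzk
  refine Set.infinite_of_injective_forall_mem (f := zk) ?_ ?_
  · intro k k' h
    exact hFkinj (congrArg Prod.fst h)
  · intro k
    constructor
    · intro r hr
      exact Finset.mem_image_of_mem (fun r => (Fk k).filter (fun n => r n = true)) hr
    · intro s hs hmem
      obtain ⟨r, hr, hflt⟩ := Finset.mem_image.mp hmem
      have hrs : r ≠ s := h r hr s hs
      have hsep0 : sep r s ∈ F₀ :=
        Finset.mem_image_of_mem (fun p => sep p.1 p.2)
          (Finset.mem_product.mpr ⟨hr, hs⟩ : (r, s) ∈ Ps ×ˢ Ps')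
      have hsep : sep r s ∈ Fk k := Finset.mem_insert_of_mem hsep0
      exact filter_ne_of_sep hrs hsep hflt

lemma goodCodes_nonempty {Ps Ps' : Finset (ℕ → Bool)}
    (h : ∀ r ∈ Ps, ∀ s ∈ Ps', r ≠ s) : (goodCodes Ps Ps').Nonempty :=
  (goodCodes_infinite h).nonempty

/-! #### intersections of the ℕ-side generator sets -/

lemma AF_empty (r s : ℕ → Bool) : Aset r ∩ Fset s = ∅ := by
  ext x; simp only [Set.mem_inter_iff, Set.mem_empty_iff_false, iff_false]
  rintro ⟨h1, h2⟩
  have := mod4_Aset h1; have := mod4_Fset h2; omega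

lemma EB_empty (r s : ℕ → Bool) : Eset r ∩ Bset s = ∅ := by
  ext x; simp only [Set.mem_inter_iff, Set.mem_empty_iff_false, iff_false]
  rintro ⟨h1, h2⟩
  have := mod4_Eset h1; have := mod4_Bset h2; omega

lemma EF_empty (r s : ℕ → Bool) : Eset r ∩ Fset s = ∅ := by
  ext x; simp only [Set.mem_inter_iff, Set.mem_empty_iff_false, iff_false]
  rintro ⟨h1, h2⟩
  have := mod4_Eset h1; have := mod4_Fset h2; omega

lemma DC_finite (r s : ℕ → Bool) : (Dset r ∩ Cset s).Finite := by
  have : Dset r ∩ Cset s =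
      (Aset r ∩ Bset s) ∪ ((Aset r ∩ Fset s) ∪ ((Eset r ∩ Bset s) ∪ (Eset r ∩ Fset s))) := by
    rw [Dset, Cset]
    ext x
    simp only [Set.mem_inter_iff, Set.mem_union]
    tauto
  rw [this, AF_empty, EB_empty, EF_empty]
  simp only [Set.union_empty]
  exact (AB_subsingleton r s).finite


/-! #### the real-side generator sets -/

def lo (k : ℕ) : ℝ := (2⁻¹ : ℝ) ^ (k + 3)
def hi (k : ℕ) : ℝ := (2⁻¹ : ℝ) ^ (k + 2)

lemma lo_pos (k : ℕ) : 0 < lo k := by unfold lo; positivity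

lemma lo_lt_hi (k : ℕ) : lo k < hi k := by
  apply pow_lt_pow_right_of_lt_one₀ (by norm_num) (by norm_num)
  omega

lemma hi_le_quarter (k : ℕ) : hi k ≤ 4⁻¹ := by
  have h1 : (4⁻¹ : ℝ) = (2⁻¹ : ℝ) ^ 2 := by norm_num
  rw [h1, hi]
  apply pow_le_pow_of_le_one (by norm_num) (by norm_num)
  omega

lemma hi_le_lo {k k' : ℕ} (h : k < k') : hi k' ≤ lo k := by
  rw [hi, lo]
  apply pow_le_pow_of_le_one (by norm_num) (by norm_num)
  omega

def ICode (k : ℕ) : Set ℝ := Ioc (lo k) (hi k)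
def JCode (k : ℕ) : Set ℝ := Ioc (2⁻¹ + lo k) (2⁻¹ + hi k)

lemma ICode_subset (k : ℕ) : ICode k ⊆ Ioc (0:ℝ) 4⁻¹ := fun x hx =>
  ⟨lt_trans (lo_pos k) hx.1, le_trans hx.2 (hi_le_quarter k)⟩

lemma JCode_subset (k : ℕ) : JCode k ⊆ Ioc (2⁻¹ : ℝ) (2⁻¹ + 4⁻¹) := fun x hx =>
  ⟨lt_of_le_of_lt (by linarith [lo_pos k]) hx.1,
   le_trans hx.2 (by linarith [hi_le_quarter k])⟩

lemma ICode_disjoint {k k' : ℕ} (h : k ≠ k') : ICode k ∩ ICode k' = ∅ := by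
  rcases Nat.lt_or_ge k k' with hlt | hge
  · ext x
    simp only [ICode, Set.mem_inter_iff, Set.mem_Ioc, Set.mem_empty_iff_false, iff_false]
    rintro ⟨⟨h1, _⟩, ⟨_, h4⟩⟩
    have := hi_le_lo hlt
    linarith
  · have hlt : k' < k := lt_of_le_of_ne hge (Ne.symm h)
    ext x
    simp only [ICode, Set.mem_inter_iff, Set.mem_Ioc, Set.mem_empty_iff_false, iff_false]
    rintro ⟨⟨_, h2⟩, ⟨h3, _⟩⟩
    have := hi_le_lo hlt
    linarith

lemma JCode_disjoint {k k' : ℕ} (h : k ≠ k') : JCode k ∩ JCode k' = ∅ := by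
  have h0 := ICode_disjoint h
  ext x
  simp only [JCode, Set.mem_inter_iff, Set.mem_Ioc, Set.mem_empty_iff_false, iff_false]
  rintro ⟨⟨h1, h2⟩, ⟨h3, h4⟩⟩
  have : x - 2⁻¹ ∈ ICode k ∩ ICode k' := by
    constructor <;> constructor <;> [linarith; linarith; linarith; linarith]
  rw [h0] at this
  exact this

lemma volume_ICode (k : ℕ) : volume (ICode k) ≠ 0 := by
  rw [ICode, Real.volume_Ioc]
  simp only [ne_eq, ENNReal.ofReal_eq_zero, not_le]
  linarith [lo_lt_hi k]

lemma volume_JCode (k : ℕ) : volume (JCode k) ≠ 0 := by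
  rw [JCode, Real.volume_Ioc]
  simp only [ne_eq, ENNReal.ofReal_eq_zero, not_le]
  linarith [lo_lt_hi k]

def eSet (r : ℕ → Bool) : Set ℝ := ⋃ z ∈ fkSet r, ICode (Encodable.encode z)
def fSet (r : ℕ → Bool) : Set ℝ := ⋃ z ∈ fkSet r, JCode (Encodable.encode z)

lemma eSet_subset (r : ℕ → Bool) : eSet r ⊆ Ioc (0:ℝ) 4⁻¹ := by
  apply Set.iUnion₂_subset
  intro z _
  exact ICode_subset _

lemma fSet_subset (r : ℕ → Bool) : fSet r ⊆ Ioc (2⁻¹:ℝ) (2⁻¹ + 4⁻¹) := by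
  apply Set.iUnion₂_subset
  intro z _
  exact JCode_subset _

lemma eSet_subset_Ioc (r : ℕ → Bool) : eSet r ⊆ Ioc (0:ℝ) 1 := fun x hx =>
  ⟨(eSet_subset r hx).1, le_trans (eSet_subset r hx).2 (by norm_num)⟩

lemma fSet_subset_Ioc (r : ℕ → Bool) : fSet r ⊆ Ioc (0:ℝ) 1 := fun x hx =>
  ⟨lt_trans (by norm_num) (fSet_subset r hx).1, le_trans (fSet_subset r hx).2 (by norm_num)⟩

lemma eSet_measurable (r : ℕ → Bool) : MeasurableSet (eSet r) :=
  MeasurableSet.biUnion (Set.to_countable _) (fun _ _ => measurableSet_Ioc)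

lemma fSet_measurable (r : ℕ → Bool) : MeasurableSet (fSet r) :=
  MeasurableSet.biUnion (Set.to_countable _) (fun _ _ => measurableSet_Ioc)

lemma eSet_inter_fSet (r s : ℕ → Bool) : eSet r ∩ fSet s = ∅ := by
  ext x
  simp only [Set.mem_inter_iff, Set.mem_empty_iff_false, iff_false]
  rintro ⟨h1, h2⟩
  have := (eSet_subset r h1).2
  have := (fSet_subset s h2).1
  linarith

lemma ICode_subset_eSet {r : ℕ → Bool} {z : Code} (h : z ∈ fkSet r) :
    ICode (Encodable.encode z) ⊆ eSet r :=
  Set.subset_biUnion_of_mem (u := fun z => ICode (Encodable.encode z)) h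

lemma ICode_inter_eSet {r : ℕ → Bool} {z : Code} (h : z ∉ fkSet r) :
    ICode (Encodable.encode z) ∩ eSet r = ∅ := by
  apply Set.eq_empty_iff_forall_notMem.mpr
  rintro x ⟨hx, hmem⟩
  rw [eSet, Set.mem_iUnion₂] at hmem
  obtain ⟨w, hw, hxw⟩ := hmem
  have hne : Encodable.encode z ≠ Encodable.encode w := fun he =>
    h (Encodable.encode_injective he ▸ hw)
  have hmem2 : x ∈ ICode (Encodable.encode z) ∩ ICode (Encodable.encode w) := ⟨hx, hxw⟩
  rw [ICode_disjoint hne] at hmem2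
  exact hmem2

lemma JCode_subset_fSet {r : ℕ → Bool} {z : Code} (h : z ∈ fkSet r) :
    JCode (Encodable.encode z) ⊆ fSet r :=
  Set.subset_biUnion_of_mem (u := fun z => JCode (Encodable.encode z)) h

lemma JCode_inter_fSet {r : ℕ → Bool} {z : Code} (h : z ∉ fkSet r) :
    JCode (Encodable.encode z) ∩ fSet r = ∅ := by
  apply Set.eq_empty_iff_forall_notMem.mpr
  rintro x ⟨hx, hmem⟩
  rw [fSet, Set.mem_iUnion₂] at hmem
  obtain ⟨w, hw, hxw⟩ := hmem
  have hne : Encodable.encode z ≠ Encodable.encode w := fun he =>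
    h (Encodable.encode_injective he ▸ hw)
  have hmem2 : x ∈ JCode (Encodable.encode z) ∩ JCode (Encodable.encode w) := ⟨hx, hxw⟩
  rw [JCode_disjoint hne] at hmem2
  exact hmem2

lemma ICode_inter_fSet (k : ℕ) (s : ℕ → Bool) : ICode k ∩ fSet s = ∅ := by
  ext x
  simp only [Set.mem_inter_iff, Set.mem_empty_iff_false, iff_false]
  rintro ⟨h1, h2⟩
  have := (ICode_subset k h1).2
  have := (fSet_subset s h2).1
  linarith

lemma JCode_inter_eSet (k : ℕ) (s : ℕ → Bool) : JCode k ∩ eSet s = ∅ := by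
  ext x
  simp only [Set.mem_inter_iff, Set.mem_empty_iff_false, iff_false]
  rintro ⟨h1, h2⟩
  have h3 := (JCode_subset k h1).1
  have := (eSet_subset s h2).2
  linarith


/-! #### the index type of size ℵ₁ -/

lemma aleph1_le_mk_fun : Cardinal.aleph 1 ≤ Cardinal.mk (ℕ → Bool) := by
  have h1 : Cardinal.mk (ℕ → Bool) = 2 ^ Cardinal.aleph0 := by simp [Cardinal.mk_arrow]
  have h2 : Cardinal.aleph 1 = Order.succ Cardinal.aleph0 := by
    rw [← Cardinal.aleph_zero, ← Cardinal.aleph_succ]; norm_num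
  rw [h1, h2, Order.succ_le_iff]
  exact Cardinal.cantor _

/-- a set of branches of size ℵ₁ -/
def RSet : Set (ℕ → Bool) := (Cardinal.le_mk_iff_exists_set.mp aleph1_le_mk_fun).choose

lemma mk_RSet : Cardinal.mk RSet = Cardinal.aleph 1 :=
  (Cardinal.le_mk_iff_exists_set.mp aleph1_le_mk_fun).choose_spec

/-- the index type for one family of generators -/
def Jt : Type := RSet

lemma mk_Jt : Cardinal.mk Jt = Cardinal.aleph 1 := mk_RSet

/-- the value of an index, as a branch -/
def bv (j : Jt) : ℕ → Bool := j.1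

lemma bv_inj : Function.Injective bv := fun j j' h => Subtype.ext h

/-- the index type for all generators -/
def Idx : Type := Jt ⊕ Jt

lemma mk_Idx : Cardinal.mk Idx = Cardinal.aleph 1 := by
  have : Cardinal.mk Idx = Cardinal.mk Jt + Cardinal.mk Jt := by
    rw [Idx, Cardinal.mk_sum]; simp
  rw [this, mk_Jt, Cardinal.add_eq_self]
  exact le_of_lt (by exact_mod_cast Cardinal.aleph0_lt_aleph_one)

/-! #### generators -/

def gI : Idx → ISet :=
  Sum.elim
    (fun j => ⟨eSet (bv j), eSet_measurable _, eSet_subset_Ioc _⟩)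
    (fun j => ⟨fSet (bv j), fSet_measurable _, fSet_subset_Ioc _⟩)

def gM : Idx → MAlgI := fun i => MAlgI.mk (gI i)

def gN : Idx → Set ℕ := Sum.elim (fun j => Dset (bv j)) (fun j => Cset (bv j))

def gP : Idx → PFin ℕ := fun i => PFin.mk (gN i)

lemma gI_subset (i : Idx) : (gI i : Set ℝ) ⊆ Ioc (0:ℝ) 1 := (gI i).2.2

/-- the extra element `a`, the class of `(0, 1/2]` -/
def aI : ISet := ⟨Ioc (0:ℝ) 2⁻¹, measurableSet_Ioc, fun x hx => ⟨hx.1, le_trans hx.2 (by norm_num)⟩⟩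

def aM : MAlgI := MAlgI.mk aI

/-! #### Boolean expressions -/

inductive BExpr : Type
  | var : Idx → BExpr
  | bot : BExpr
  | top : BExpr
  | sup : BExpr → BExpr → BExpr
  | inf : BExpr → BExpr → BExpr
  | compl : BExpr → BExpr

namespace ISet

def isup (A B : ISet) : ISet := ⟨A.1 ∪ B.1, A.2.1.union B.2.1, Set.union_subset A.2.2 B.2.2⟩
def iinf (A B : ISet) : ISet := ⟨A.1 ∩ B.1, A.2.1.inter B.2.1, fun _ hx => A.2.2 hx.1⟩
def icompl (A : ISet) : ISet :=
  ⟨Ioc (0:ℝ) 1 \ A.1, measurableSet_Ioc.diff A.2.1, Set.diff_subset⟩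
def ibot : ISet := ⟨∅, MeasurableSet.empty, Set.empty_subset _⟩
def itop : ISet := ⟨Ioc (0:ℝ) 1, measurableSet_Ioc, subset_rfl⟩

end ISet

lemma MAlgI.sup_mk (A B : ISet) :
    MAlgI.sup (MAlgI.mk A) (MAlgI.mk B) = MAlgI.mk (A.isup B) := rfl
lemma MAlgI.inf_mk (A B : ISet) :
    MAlgI.inf (MAlgI.mk A) (MAlgI.mk B) = MAlgI.mk (A.iinf B) := rfl
lemma MAlgI.compl_mk (A : ISet) :
    MAlgI.compl (MAlgI.mk A) = MAlgI.mk A.icompl := rfl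
lemma MAlgI.bot_def : MAlgI.bot = MAlgI.mk ISet.ibot := rfl
lemma MAlgI.top_def : MAlgI.top = MAlgI.mk ISet.itop := rfl

/-- set-level evaluation on the real side -/
def evalI : BExpr → ISet
  | .var i => gI i
  | .bot => ISet.ibot
  | .top => ISet.itop
  | .sup e₁ e₂ => (evalI e₁).isup (evalI e₂)
  | .inf e₁ e₂ => (evalI e₁).iinf (evalI e₂)
  | .compl e => (evalI e).icompl

/-- evaluation in the measure algebra -/
def evalM : BExpr → MAlgI
  | .var i => gM i
  | .bot => MAlgI.bot
  | .top => MAlgI.top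
  | .sup e₁ e₂ => MAlgI.sup (evalM e₁) (evalM e₂)
  | .inf e₁ e₂ => MAlgI.inf (evalM e₁) (evalM e₂)
  | .compl e => MAlgI.compl (evalM e)

lemma evalM_eq_mk (e : BExpr) : evalM e = MAlgI.mk (evalI e) := by
  induction e with
  | var i => rfl
  | bot => rfl
  | top => rfl
  | sup e₁ e₂ ih₁ ih₂ => rw [evalM, evalI, ih₁, ih₂, MAlgI.sup_mk]
  | inf e₁ e₂ ih₁ ih₂ => rw [evalM, evalI, ih₁, ih₂, MAlgI.inf_mk]
  | compl e ih => rw [evalM, evalI, ih, MAlgI.compl_mk]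

/-- set-level evaluation on the ℕ side -/
def evalN : BExpr → Set ℕ
  | .var i => gN i
  | .bot => ∅
  | .top => Set.univ
  | .sup e₁ e₂ => evalN e₁ ∪ evalN e₂
  | .inf e₁ e₂ => evalN e₁ ∩ evalN e₂
  | .compl e => (evalN e)ᶜ

/-- evaluation in `P(ℕ)/fin` -/
def evalP : BExpr → PFin ℕ
  | .var i => gP i
  | .bot => PFin.bot
  | .top => PFin.top
  | .sup e₁ e₂ => PFin.sup (evalP e₁) (evalP e₂)
  | .inf e₁ e₂ => PFin.inf (evalP e₁) (evalP e₂)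
  | .compl e => PFin.compl (evalP e)

lemma evalP_eq_mk (e : BExpr) : evalP e = PFin.mk (evalN e) := by
  induction e with
  | var i => rfl
  | bot => rfl
  | top => rfl
  | sup e₁ e₂ ih₁ ih₂ => rw [evalP, evalN, ih₁, ih₂, PFin.sup_mk]
  | inf e₁ e₂ ih₁ ih₂ => rw [evalP, evalN, ih₁, ih₂, PFin.inf_mk]
  | compl e ih => rw [evalP, evalN, ih, PFin.compl_mk]

/-- truth-value evaluation -/
def vEval (v : Idx → Prop) : BExpr → Prop
  | .var i => v i
  | .bot => False
  | .top => True
  | .sup e₁ e₂ => vEval v e₁ ∨ vEval v e₂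
  | .inf e₁ e₂ => vEval v e₁ ∧ vEval v e₂
  | .compl e => ¬ vEval v e

/-- the (finitely many) variables of an expression -/
def bvars : BExpr → Finset Idx
  | .var i => {i}
  | .bot => ∅
  | .top => ∅
  | .sup e₁ e₂ => bvars e₁ ∪ bvars e₂
  | .inf e₁ e₂ => bvars e₁ ∪ bvars e₂
  | .compl e => bvars e

lemma vEval_congr {v w : Idx → Prop} (e : BExpr) (h : ∀ i ∈ bvars e, (v i ↔ w i)) :
    vEval v e ↔ vEval w e := by
  induction e with
  | var i => exact h i (by simp [bvars])
  | bot => rfl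
  | top => rfl
  | sup e₁ e₂ ih₁ ih₂ =>
      rw [vEval, vEval,
        ih₁ (fun i hi => h i (by simp [bvars, hi])), ih₂ (fun i hi => h i (by simp [bvars, hi]))]
  | inf e₁ e₂ ih₁ ih₂ =>
      rw [vEval, vEval,
        ih₁ (fun i hi => h i (by simp [bvars, hi])), ih₂ (fun i hi => h i (by simp [bvars, hi]))]
  | compl e ih => rw [vEval, vEval, ih (fun i hi => h i (by simp [bvars, hi]))]

lemma mem_evalI {x : ℝ} (e : BExpr) :
    x ∈ (evalI e : Set ℝ) ↔ x ∈ Ioc (0:ℝ) 1 ∧ vEval (fun i => x ∈ (gI i : Set ℝ)) e := by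
  induction e with
  | var i =>
      rw [evalI, vEval]
      exact ⟨fun h => ⟨gI_subset i h, h⟩, fun h => h.2⟩
  | bot => simp [evalI, ISet.ibot, vEval]
  | top => simp [evalI, ISet.itop, vEval]
  | sup e₁ e₂ ih₁ ih₂ =>
      show x ∈ (evalI e₁ : Set ℝ) ∪ (evalI e₂ : Set ℝ) ↔ _
      rw [Set.mem_union, ih₁, ih₂, vEval]
      tauto
  | inf e₁ e₂ ih₁ ih₂ =>
      show x ∈ (evalI e₁ : Set ℝ) ∩ (evalI e₂ : Set ℝ) ↔ _
      rw [Set.mem_inter_iff, ih₁, ih₂, vEval]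
      tauto
  | compl e ih =>
      show x ∈ Ioc (0:ℝ) 1 \ (evalI e : Set ℝ) ↔ _
      rw [Set.mem_diff, vEval]
      constructor
      · intro h
        exact ⟨h.1, fun hc => h.2 ((ih.mpr ⟨h.1, hc⟩))⟩
      · intro h
        exact ⟨h.1, fun hc => h.2 (ih.mp hc).2⟩

lemma mem_evalN {n : ℕ} (e : BExpr) :
    n ∈ evalN e ↔ vEval (fun i => n ∈ gN i) e := by
  induction e with
  | var i => rfl
  | bot => simp [evalN, vEval]
  | top => simp [evalN, vEval]
  | sup e₁ e₂ ih₁ ih₂ => rw [evalN, Set.mem_union, ih₁, ih₂]; rfl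
  | inf e₁ e₂ ih₁ ih₂ => rw [evalN, Set.mem_inter_iff, ih₁, ih₂]; rfl
  | compl e ih => rw [evalN, Set.mem_compl_iff, ih]; rfl


/-! #### cells and the dichotomy -/

lemma encE_mem_Eset_iff {z : Code} {r : ℕ → Bool} : encE z ∈ Eset r ↔ z ∈ fkSet r := by
  constructor
  · rintro ⟨w, hw, he⟩
    rwa [← encE_inj he]
  · intro h
    exact ⟨z, h, rfl⟩

lemma encF_mem_Fset_iff {z : Code} {r : ℕ → Bool} : encF z ∈ Fset r ↔ z ∈ fkSet r := by
  constructor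
  · rintro ⟨w, hw, he⟩
    rwa [← encF_inj he]
  · intro h
    exact ⟨z, h, rfl⟩

lemma encE_mod (z : Code) : encE z % 4 = 1 := by simp [encE, Nat.add_mod, Nat.mul_mod_right]
lemma encF_mod (z : Code) : encF z % 4 = 2 := by simp [encF, Nat.add_mod, Nat.mul_mod_right]

lemma encE_mem_Dset_iff {z : Code} {r : ℕ → Bool} : encE z ∈ Dset r ↔ z ∈ fkSet r := by
  rw [Dset, Set.mem_union, encE_mem_Eset_iff]
  constructor
  · rintro (h | h)
    · have := mod4_Aset h; have := encE_mod z; omega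
    · exact h
  · exact Or.inr

lemma encE_notMem_Cset {z : Code} {r : ℕ → Bool} : encE z ∉ Cset r := by
  rintro (h | h)
  · have := mod4_Bset h; have := encE_mod z; omega
  · have := mod4_Fset h; have := encE_mod z; omega

lemma encF_mem_Cset_iff {z : Code} {r : ℕ → Bool} : encF z ∈ Cset r ↔ z ∈ fkSet r := by
  rw [Cset, Set.mem_union, encF_mem_Fset_iff]
  constructor
  · rintro (h | h)
    · have := mod4_Bset h; have := encF_mod z; omega
    · exact h
  · exact Or.inr

lemma encF_notMem_Dset {z : Code} {r : ℕ → Bool} : encF z ∉ Dset r := by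
  rintro (h | h)
  · have := mod4_Aset h; have := encF_mod z; omega
  · have := mod4_Eset h; have := encF_mod z; omega

lemma ICode_subset_Ioc01 (k : ℕ) : ICode k ⊆ Ioc (0:ℝ) 1 := fun x hx =>
  ⟨(ICode_subset k hx).1, le_trans (ICode_subset k hx).2 (by norm_num)⟩

lemma JCode_subset_Ioc01 (k : ℕ) : JCode k ⊆ Ioc (0:ℝ) 1 := fun x hx =>
  ⟨lt_trans (by norm_num) (JCode_subset k hx).1, le_trans (JCode_subset k hx).2 (by norm_num)⟩

/-- the cell of all points of `(0,1]` realizing the pattern `σ` on the variables in `V` -/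
def cellM (V : Finset Idx) (σ : Idx → Bool) : Set ℝ :=
  {x | x ∈ Ioc (0:ℝ) 1 ∧ ∀ i ∈ V, (x ∈ (gI i : Set ℝ) ↔ σ i = true)}

/-- the cell of all naturals realizing the pattern `σ` on the variables in `V` -/
def cellN (V : Finset Idx) (σ : Idx → Bool) : Set ℕ :=
  {n | ∀ i ∈ V, (n ∈ gN i ↔ σ i = true)}

/-- a pattern is bad if it makes some `e`-generator and some `f`-generator both true -/
def isBad (V : Finset Idx) (σ : Idx → Bool) : Prop :=
  (∃ j, Sum.inl j ∈ V ∧ σ (Sum.inl j) = true) ∧ (∃ j, Sum.inr j ∈ V ∧ σ (Sum.inr j) = true)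

lemma bad_cellM {V : Finset Idx} {σ : Idx → Bool} (h : isBad V σ) : cellM V σ = ∅ := by
  obtain ⟨⟨j, hj, hjt⟩, ⟨j', hj', hjt'⟩⟩ := h
  apply Set.eq_empty_iff_forall_notMem.mpr
  rintro x ⟨hx1, hx2⟩
  have h1 : x ∈ eSet (bv j) := (hx2 _ hj).mpr hjt
  have h2 : x ∈ fSet (bv j') := (hx2 _ hj').mpr hjt'
  have : x ∈ eSet (bv j) ∩ fSet (bv j') := ⟨h1, h2⟩
  rw [eSet_inter_fSet] at this
  exact this

lemma bad_cellN {V : Finset Idx} {σ : Idx → Bool} (h : isBad V σ) : (cellN V σ).Finite := by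
  obtain ⟨⟨j, hj, hjt⟩, ⟨j', hj', hjt'⟩⟩ := h
  apply (DC_finite (bv j) (bv j')).subset
  intro n hn
  exact ⟨(hn _ hj).mpr hjt, (hn _ hj').mpr hjt'⟩

/-- the branches of `e`-variables in `V` with pattern value `b` -/
def inlOf (V : Finset Idx) (σ : Idx → Bool) (b : Bool) : Finset (ℕ → Bool) :=
  (V.filterMap
    (fun i => match i with
      | Sum.inl j => if σ (Sum.inl j) = b then some (bv j) else none
      | Sum.inr _ => none)
    (by
      intro a a' c hc hc'
      match a, a' with
      | Sum.inl j, Sum.inl j' =>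
          simp only at hc hc'
          split at hc <;> split at hc' <;> simp_all
          exact congrArg Sum.inl (bv_inj (hc.trans hc'.symm))
      | Sum.inl j, Sum.inr j' => simp at hc'
      | Sum.inr j, Sum.inl j' => simp at hc
      | Sum.inr j, Sum.inr j' => simp at hc))

/-- the branches of `f`-variables in `V` with pattern value `b` -/
def inrOf (V : Finset Idx) (σ : Idx → Bool) (b : Bool) : Finset (ℕ → Bool) :=
  (V.filterMap
    (fun i => match i with
      | Sum.inr j => if σ (Sum.inr j) = b then some (bv j) else none
      | Sum.inl _ => none)
    (by
      intro a a' c hc hc'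
      match a, a' with
      | Sum.inr j, Sum.inr j' =>
          simp only at hc hc'
          split at hc <;> split at hc' <;> simp_all
          exact congrArg Sum.inr (bv_inj (hc.trans hc'.symm))
      | Sum.inr j, Sum.inl j' => simp at hc'
      | Sum.inl j, Sum.inr j' => simp at hc
      | Sum.inl j, Sum.inl j' => simp at hc))

lemma mem_inlOf {V : Finset Idx} {σ : Idx → Bool} {b : Bool} {r : ℕ → Bool} :
    r ∈ inlOf V σ b ↔ ∃ j, Sum.inl j ∈ V ∧ σ (Sum.inl j) = b ∧ bv j = r := by
  rw [inlOf, Finset.mem_filterMap]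
  constructor
  · rintro ⟨i, hi, hopt⟩
    match i with
    | Sum.inl j =>
        simp only at hopt
        split at hopt
        · exact ⟨j, hi, by assumption, by simpa using hopt⟩
        · simp at hopt
    | Sum.inr j => simp at hopt
  · rintro ⟨j, hj, hb, rfl⟩
    exact ⟨Sum.inl j, hj, by simp [hb]⟩

lemma mem_inrOf {V : Finset Idx} {σ : Idx → Bool} {b : Bool} {r : ℕ → Bool} :
    r ∈ inrOf V σ b ↔ ∃ j, Sum.inr j ∈ V ∧ σ (Sum.inr j) = b ∧ bv j = r := by
  rw [inrOf, Finset.mem_filterMap]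
  constructor
  · rintro ⟨i, hi, hopt⟩
    match i with
    | Sum.inr j =>
        simp only at hopt
        split at hopt
        · exact ⟨j, hi, by assumption, by simpa using hopt⟩
        · simp at hopt
    | Sum.inl j => simp at hopt
  · rintro ⟨j, hj, hb, rfl⟩
    exact ⟨Sum.inr j, hj, by simp [hb]⟩

lemma inlOf_disj {V : Finset Idx} {σ : Idx → Bool} :
    ∀ r ∈ inlOf V σ true, ∀ s ∈ inlOf V σ false, r ≠ s := by
  intro r hr s hs hrs
  obtain ⟨j, _, hjt, rfl⟩ := mem_inlOf.mp hr
  obtain ⟨j', _, hjf, hjj⟩ := mem_inlOf.mp hs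
  subst hrs
  rw [show j = j' from (bv_inj hjj).symm] at hjt
  rw [hjt] at hjf
  exact Bool.noConfusion hjf

lemma inrOf_disj {V : Finset Idx} {σ : Idx → Bool} :
    ∀ r ∈ inrOf V σ true, ∀ s ∈ inrOf V σ false, r ≠ s := by
  intro r hr s hs hrs
  obtain ⟨j, _, hjt, rfl⟩ := mem_inrOf.mp hr
  obtain ⟨j', _, hjf, hjj⟩ := mem_inrOf.mp hs
  subst hrs
  rw [show j = j' from (bv_inj hjj).symm] at hjt
  rw [hjt] at hjf
  exact Bool.noConfusion hjf


/-! #### good patterns -/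

lemma not_bad_cases {V : Finset Idx} {σ : Idx → Bool} (h : ¬ isBad V σ) :
    (∀ j, Sum.inl j ∈ V → σ (Sum.inl j) = false) ∨
    (∀ j, Sum.inr j ∈ V → σ (Sum.inr j) = false) := by
  rw [isBad, not_and_or] at h
  rcases h with h | h
  · left
    intro j hj
    cases hσ : σ (Sum.inl j)
    · rfl
    · exact absurd ⟨j, hj, hσ⟩ h
  · right
    intro j hj
    cases hσ : σ (Sum.inr j)
    · rfl
    · exact absurd ⟨j, hj, hσ⟩ h

lemma ICode_subset_cellM {V : Finset Idx} {σ : Idx → Bool}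
    (hB : ∀ j, Sum.inr j ∈ V → σ (Sum.inr j) = false) {z : Code}
    (hz : z ∈ goodCodes (inlOf V σ true) (inlOf V σ false)) :
    ICode (Encodable.encode z) ⊆ cellM V σ := by
  intro x hx
  refine ⟨ICode_subset_Ioc01 _ hx, ?_⟩
  intro i hi
  match i with
  | Sum.inl j =>
      show x ∈ eSet (bv j) ↔ _
      cases hσ : σ (Sum.inl j) with
      | true =>
          have hmem : bv j ∈ inlOf V σ true := mem_inlOf.mpr ⟨j, hi, hσ, rfl⟩
          exact iff_of_true (ICode_subset_eSet (hz.1 _ hmem) hx) rfl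
      | false =>
          have hmem : bv j ∈ inlOf V σ false := mem_inlOf.mpr ⟨j, hi, hσ, rfl⟩
          refine iff_of_false ?_ (by simp)
          intro hmem2
          have : x ∈ ICode (Encodable.encode z) ∩ eSet (bv j) := ⟨hx, hmem2⟩
          rw [ICode_inter_eSet (hz.2 _ hmem)] at this
          exact this
  | Sum.inr j =>
      show x ∈ fSet (bv j) ↔ _
      rw [hB j hi]
      refine iff_of_false ?_ (by simp)
      intro hmem2
      have : x ∈ ICode (Encodable.encode z) ∩ fSet (bv j) := ⟨hx, hmem2⟩
      rw [ICode_inter_fSet] at this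
      exact this

lemma JCode_subset_cellM {V : Finset Idx} {σ : Idx → Bool}
    (hA : ∀ j, Sum.inl j ∈ V → σ (Sum.inl j) = false) {z : Code}
    (hz : z ∈ goodCodes (inrOf V σ true) (inrOf V σ false)) :
    JCode (Encodable.encode z) ⊆ cellM V σ := by
  intro x hx
  refine ⟨JCode_subset_Ioc01 _ hx, ?_⟩
  intro i hi
  match i with
  | Sum.inr j =>
      show x ∈ fSet (bv j) ↔ _
      cases hσ : σ (Sum.inr j) with
      | true =>
          have hmem : bv j ∈ inrOf V σ true := mem_inrOf.mpr ⟨j, hi, hσ, rfl⟩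
          exact iff_of_true (JCode_subset_fSet (hz.1 _ hmem) hx) rfl
      | false =>
          have hmem : bv j ∈ inrOf V σ false := mem_inrOf.mpr ⟨j, hi, hσ, rfl⟩
          refine iff_of_false ?_ (by simp)
          intro hmem2
          have : x ∈ JCode (Encodable.encode z) ∩ fSet (bv j) := ⟨hx, hmem2⟩
          rw [JCode_inter_fSet (hz.2 _ hmem)] at this
          exact this
  | Sum.inl j =>
      show x ∈ eSet (bv j) ↔ _
      rw [hA j hi]
      refine iff_of_false ?_ (by simp)
      intro hmem2
      have : x ∈ JCode (Encodable.encode z) ∩ eSet (bv j) := ⟨hx, hmem2⟩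
      rw [JCode_inter_eSet] at this
      exact this

lemma good_cellM {V : Finset Idx} {σ : Idx → Bool} (h : ¬ isBad V σ) :
    volume (cellM V σ) ≠ 0 := by
  rcases not_bad_cases h with hA | hB
  · obtain ⟨z, hz⟩ := goodCodes_nonempty (inrOf_disj (V := V) (σ := σ))
    intro h0
    exact volume_JCode _ (measure_mono_null (JCode_subset_cellM hA hz) h0)
  · obtain ⟨z, hz⟩ := goodCodes_nonempty (inlOf_disj (V := V) (σ := σ))
    intro h0
    exact volume_ICode _ (measure_mono_null (ICode_subset_cellM hB hz) h0)

lemma encE_goodCodes_subset_cellN {V : Finset Idx} {σ : Idx → Bool}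
    (hB : ∀ j, Sum.inr j ∈ V → σ (Sum.inr j) = false) :
    encE '' goodCodes (inlOf V σ true) (inlOf V σ false) ⊆ cellN V σ := by
  rintro n ⟨z, hz, rfl⟩
  intro i hi
  match i with
  | Sum.inl j =>
      show encE z ∈ Dset (bv j) ↔ _
      rw [encE_mem_Dset_iff]
      cases hσ : σ (Sum.inl j) with
      | true =>
          exact iff_of_true (hz.1 _ (mem_inlOf.mpr ⟨j, hi, hσ, rfl⟩)) rfl
      | false =>
          exact iff_of_false (hz.2 _ (mem_inlOf.mpr ⟨j, hi, hσ, rfl⟩)) (by simp)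
  | Sum.inr j =>
      show encE z ∈ Cset (bv j) ↔ _
      rw [hB j hi]
      exact iff_of_false encE_notMem_Cset (by simp)

lemma encF_goodCodes_subset_cellN {V : Finset Idx} {σ : Idx → Bool}
    (hA : ∀ j, Sum.inl j ∈ V → σ (Sum.inl j) = false) :
    encF '' goodCodes (inrOf V σ true) (inrOf V σ false) ⊆ cellN V σ := by
  rintro n ⟨z, hz, rfl⟩
  intro i hi
  match i with
  | Sum.inr j =>
      show encF z ∈ Cset (bv j) ↔ _
      rw [encF_mem_Cset_iff]
      cases hσ : σ (Sum.inr j) with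
      | true =>
          exact iff_of_true (hz.1 _ (mem_inrOf.mpr ⟨j, hi, hσ, rfl⟩)) rfl
      | false =>
          exact iff_of_false (hz.2 _ (mem_inrOf.mpr ⟨j, hi, hσ, rfl⟩)) (by simp)
  | Sum.inl j =>
      show encF z ∈ Dset (bv j) ↔ _
      rw [hA j hi]
      exact iff_of_false encF_notMem_Dset (by simp)

lemma good_cellN {V : Finset Idx} {σ : Idx → Bool} (h : ¬ isBad V σ) :
    (cellN V σ).Infinite := by
  rcases not_bad_cases h with hA | hB
  · exact ((goodCodes_infinite (inrOf_disj (V := V) (σ := σ))).image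
      (encF_inj.injOn)).mono (encF_goodCodes_subset_cellN hA)
  · exact ((goodCodes_infinite (inlOf_disj (V := V) (σ := σ))).image
      (encE_inj.injOn)).mono (encE_goodCodes_subset_cellN hB)


/-! #### the zero lemma -/

/-- extend a pattern on `V` to all indices -/
def extFn (V : Finset Idx) (τ : {i // i ∈ V} → Bool) : Idx → Bool :=
  fun i => if h : i ∈ V then τ ⟨i, h⟩ else false

lemma volume_evalI_zero_iff (e : BExpr) :
    volume ((evalI e : Set ℝ)) = 0 ↔ (evalN e).Finite := by
  classical
  constructor
  · intro h0
    have hsub : evalN e ⊆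
        ⋃ τ : ({i // i ∈ bvars e} → Bool), (cellN (bvars e) (extFn (bvars e) τ) ∩ evalN e) := by
      intro n hn
      refine Set.mem_iUnion.mpr ⟨fun i => if n ∈ gN i.1 then true else false, ?_, hn⟩
      intro i hi
      rw [extFn, dif_pos hi]
      by_cases hmem : n ∈ gN i <;> simp [hmem]
    refine Set.Finite.subset (Set.finite_iUnion ?_) hsub
    intro τ
    by_cases hbad : isBad (bvars e) (extFn (bvars e) τ)
    · exact (bad_cellN hbad).inter_of_left _
    · have hemp : cellN (bvars e) (extFn (bvars e) τ) ∩ evalN e = ∅ := by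
        apply Set.eq_empty_iff_forall_notMem.mpr
        rintro n ⟨hn1, hn2⟩
        have hval : vEval (fun i => extFn (bvars e) τ i = true) e :=
          (vEval_congr e (fun i hi => hn1 i hi)).mp ((mem_evalN e).mp hn2)
        have hsubM : cellM (bvars e) (extFn (bvars e) τ) ⊆ (evalI e : Set ℝ) := by
          intro x hx
          rw [mem_evalI]
          exact ⟨hx.1, (vEval_congr e (fun i hi => hx.2 i hi)).mpr hval⟩
        exact good_cellM hbad (measure_mono_null hsubM h0)
      rw [hemp]
      exact Set.finite_empty
  · intro hfin
    have hsub : (evalI e : Set ℝ) ⊆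
        ⋃ τ : ({i // i ∈ bvars e} → Bool),
          (cellM (bvars e) (extFn (bvars e) τ) ∩ (evalI e : Set ℝ)) := by
      intro x hx
      refine Set.mem_iUnion.mpr
        ⟨fun i => if x ∈ (gI i.1 : Set ℝ) then true else false, ⟨?_, ?_⟩, hx⟩
      · exact ((mem_evalI e).mp hx).1
      · intro i hi
        rw [extFn, dif_pos hi]
        by_cases hmem : x ∈ (gI i : Set ℝ) <;> simp [hmem]
    refine measure_mono_null hsub (measure_iUnion_null ?_)
    intro τ
    have hemp : cellM (bvars e) (extFn (bvars e) τ) ∩ (evalI e : Set ℝ) = ∅ := by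
      apply Set.eq_empty_iff_forall_notMem.mpr
      rintro x ⟨hx1, hx2⟩
      have hbad' : ¬ isBad (bvars e) (extFn (bvars e) τ) := by
        intro hbad
        rw [bad_cellM hbad] at hx1
        exact hx1
      have hval : vEval (fun i => extFn (bvars e) τ i = true) e :=
        (vEval_congr e (fun i hi => hx1.2 i hi)).mp ((mem_evalI e).mp hx2).2
      have hsubN : cellN (bvars e) (extFn (bvars e) τ) ⊆ evalN e := by
        intro n hn
        rw [mem_evalN]
        exact (vEval_congr e (fun i hi => hn i hi)).mpr hval
      exact (good_cellN hbad') (hfin.subset hsubN)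
    rw [hemp]
    exact measure_empty


/-! #### the subalgebra `L` and embedding `φ` -/

/-- symmetric-difference expression -/
def sde (e e' : BExpr) : BExpr := .sup (.inf e (.compl e')) (.inf e' (.compl e))

lemma evalI_sde (e e' : BExpr) :
    (evalI (sde e e') : Set ℝ) = symmDiff (evalI e : Set ℝ) (evalI e' : Set ℝ) := by
  have h1 := (evalI e).2.2
  have h2 := (evalI e').2.2
  show ((evalI e : Set ℝ) ∩ (Ioc (0:ℝ) 1 \ (evalI e' : Set ℝ))) ∪
      ((evalI e' : Set ℝ) ∩ (Ioc (0:ℝ) 1 \ (evalI e : Set ℝ))) = _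
  rw [Set.symmDiff_def]
  ext x
  simp only [Set.mem_union, Set.mem_inter_iff, Set.mem_diff]
  constructor
  · rintro (⟨hx, _, hn⟩ | ⟨hx, _, hn⟩)
    · exact Or.inl ⟨hx, hn⟩
    · exact Or.inr ⟨hx, hn⟩
  · rintro (⟨hx, hn⟩ | ⟨hx, hn⟩)
    · exact Or.inl ⟨hx, h1 hx, hn⟩
    · exact Or.inr ⟨hx, h2 hx, hn⟩

lemma evalN_sde (e e' : BExpr) :
    evalN (sde e e') = symmDiff (evalN e) (evalN e') := by
  show (evalN e ∩ (evalN e')ᶜ) ∪ (evalN e' ∩ (evalN e)ᶜ) = _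
  rw [Set.symmDiff_def]
  ext x
  simp only [Set.mem_union, Set.mem_inter_iff, Set.mem_diff, Set.mem_compl_iff]

lemma evalM_eq_iff_evalP_eq (e e' : BExpr) : evalM e = evalM e' ↔ evalP e = evalP e' := by
  rw [evalM_eq_mk, evalM_eq_mk, MAlgI.mk_eq_mk, evalP_eq_mk, evalP_eq_mk, PFin.mk_eq_mk,
    ← evalI_sde, ← evalN_sde, volume_evalI_zero_iff]

/-- the subalgebra -/
def Lset : Set MAlgI := Set.range evalM

/-- the embedding of `L` into `P(ℕ)/fin` -/
def phi : MAlgI → PFin ℕ :=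
  fun c => if h : ∃ e, evalM e = c then evalP h.choose else PFin.bot

lemma phi_evalM (e : BExpr) : phi (evalM e) = evalP e := by
  have h : ∃ e', evalM e' = evalM e := ⟨e, rfl⟩
  rw [phi, dif_pos h]
  exact (evalM_eq_iff_evalP_eq _ _).mp h.choose_spec

lemma Lset_subalgebra : IsSubalgebra Lset := by
  constructor
  · exact ⟨.bot, rfl⟩
  · exact ⟨.top, rfl⟩
  · rintro _ ⟨e, rfl⟩ _ ⟨e', rfl⟩
    exact ⟨.sup e e', rfl⟩
  · rintro _ ⟨e, rfl⟩ _ ⟨e', rfl⟩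
    exact ⟨.inf e e', rfl⟩
  · rintro _ ⟨e, rfl⟩
    exact ⟨.compl e, rfl⟩

lemma phi_embedding : IsEmbeddingOn Lset phi := by
  constructor
  · rintro _ ⟨e, rfl⟩ _ ⟨e', rfl⟩ h
    rw [phi_evalM, phi_evalM] at h
    exact (evalM_eq_iff_evalP_eq e e').mpr h
  · rintro _ ⟨e, rfl⟩ _ ⟨e', rfl⟩
    rw [show MAlgI.sup (evalM e) (evalM e') = evalM (.sup e e') from rfl,
      phi_evalM, phi_evalM, phi_evalM]
    rfl
  · rintro _ ⟨e, rfl⟩ _ ⟨e', rfl⟩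
    rw [show MAlgI.inf (evalM e) (evalM e') = evalM (.inf e e') from rfl,
      phi_evalM, phi_evalM, phi_evalM]
    rfl
  · rintro _ ⟨e, rfl⟩
    rw [show MAlgI.compl (evalM e) = evalM (.compl e) from rfl, phi_evalM, phi_evalM]
    rfl
  · rw [show MAlgI.bot = evalM .bot from rfl, phi_evalM]
    rfl
  · rw [show MAlgI.top = evalM .top from rfl, phi_evalM]
    rfl


/-! #### cardinality of `L` -/

lemma aleph0_le_aleph1 : Cardinal.aleph0 ≤ Cardinal.aleph 1 :=
  le_of_lt Cardinal.aleph0_lt_aleph_one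

lemma le_aleph1_add {κ μ : Cardinal} (h1 : κ ≤ Cardinal.aleph 1) (h2 : μ ≤ Cardinal.aleph 1) :
    κ + μ ≤ Cardinal.aleph 1 := by
  calc κ + μ ≤ Cardinal.aleph 1 + Cardinal.aleph 1 := add_le_add h1 h2
    _ = Cardinal.aleph 1 := Cardinal.add_eq_self aleph0_le_aleph1

lemma le_aleph1_mul {κ μ : Cardinal} (h1 : κ ≤ Cardinal.aleph 1) (h2 : μ ≤ Cardinal.aleph 1) :
    κ * μ ≤ Cardinal.aleph 1 := by
  calc κ * μ ≤ Cardinal.aleph 1 * Cardinal.aleph 1 := mul_le_mul' h1 h2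
    _ = Cardinal.aleph 1 := Cardinal.mul_eq_self aleph0_le_aleph1

def TS : ℕ → Set MAlgI
  | 0 => Set.range gM ∪ {MAlgI.bot, MAlgI.top}
  | n+1 => TS n ∪ (Set.image2 MAlgI.sup (TS n) (TS n) ∪
      (Set.image2 MAlgI.inf (TS n) (TS n) ∪ MAlgI.compl '' TS n))

lemma TS_succ_mono (n : ℕ) : TS n ⊆ TS (n+1) := Set.subset_union_left

lemma TS_mono {m n : ℕ} (h : m ≤ n) : TS m ⊆ TS n := by
  induction n with
  | zero => rw [Nat.le_zero.mp h]
  | succ n ih =>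
      rcases Nat.lt_or_ge m (n+1) with h1 | h1
      · exact (ih (Nat.lt_succ_iff.mp h1)).trans (TS_succ_mono n)
      · rw [Nat.le_antisymm h h1]

lemma evalM_mem_TS (e : BExpr) : ∃ n, evalM e ∈ TS n := by
  induction e with
  | var i => exact ⟨0, Or.inl ⟨i, rfl⟩⟩
  | bot => exact ⟨0, Or.inr (Or.inl rfl)⟩
  | top => exact ⟨0, Or.inr (Or.inr rfl)⟩
  | sup e₁ e₂ ih₁ ih₂ =>
      obtain ⟨n₁, h₁⟩ := ih₁
      obtain ⟨n₂, h₂⟩ := ih₂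
      refine ⟨max n₁ n₂ + 1, Or.inr (Or.inl ?_)⟩
      exact Set.mem_image2_of_mem (TS_mono (le_max_left _ _) h₁) (TS_mono (le_max_right _ _) h₂)
  | inf e₁ e₂ ih₁ ih₂ =>
      obtain ⟨n₁, h₁⟩ := ih₁
      obtain ⟨n₂, h₂⟩ := ih₂
      refine ⟨max n₁ n₂ + 1, Or.inr (Or.inr (Or.inl ?_))⟩
      exact Set.mem_image2_of_mem (TS_mono (le_max_left _ _) h₁) (TS_mono (le_max_right _ _) h₂)
  | compl e ih =>
      obtain ⟨n, h⟩ := ih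
      exact ⟨n + 1, Or.inr (Or.inr (Or.inr (Set.mem_image_of_mem _ h)))⟩

lemma mk_TS_le (n : ℕ) : Cardinal.mk (TS n) ≤ Cardinal.aleph 1 := by
  induction n with
  | zero =>
      refine le_trans (Cardinal.mk_union_le _ _) (le_aleph1_add ?_ ?_)
      · exact le_trans Cardinal.mk_range_le (le_of_eq mk_Idx)
      · refine le_trans ?_ aleph0_le_aleph1
        have : ({MAlgI.bot, MAlgI.top} : Set MAlgI).Countable :=
          ((Set.finite_singleton _).insert _).countable
        exact @Cardinal.mk_le_aleph0 _ this.to_subtype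
  | succ n ih =>
      refine le_trans (Cardinal.mk_union_le _ _) (le_aleph1_add ih ?_)
      refine le_trans (Cardinal.mk_union_le _ _) (le_aleph1_add ?_ ?_)
      · exact le_trans Cardinal.mk_image2_le (le_aleph1_mul ih ih)
      · refine le_trans (Cardinal.mk_union_le _ _) (le_aleph1_add ?_ ?_)
        · exact le_trans Cardinal.mk_image2_le (le_aleph1_mul ih ih)
        · exact le_trans Cardinal.mk_image_le ih

lemma mk_Lset_le : Cardinal.mk Lset ≤ Cardinal.aleph 1 := by
  have hsub : Lset ⊆ ⋃ n, TS n := by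
    rintro _ ⟨e, rfl⟩
    obtain ⟨n, hn⟩ := evalM_mem_TS e
    exact Set.mem_iUnion.mpr ⟨n, hn⟩
  refine le_trans (Cardinal.mk_le_mk_of_subset hsub) ?_
  refine le_trans (Cardinal.mk_iUnion_le TS) ?_
  apply le_aleph1_mul
  · exact le_trans Cardinal.mk_le_aleph0 aleph0_le_aleph1
  · exact ciSup_le' mk_TS_le

lemma eSet_ne {j j' : Jt} (h : j ≠ j') :
    volume (symmDiff (eSet (bv j)) (eSet (bv j'))) ≠ 0 := by
  have hbv : bv j ≠ bv j' := fun he => h (bv_inj he)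
  have hd : ∀ r ∈ ({bv j} : Finset (ℕ → Bool)), ∀ s ∈ ({bv j'} : Finset (ℕ → Bool)), r ≠ s := by
    intro r hr s hs
    rw [Finset.mem_singleton] at hr hs
    rw [hr, hs]
    exact hbv
  obtain ⟨z, hz1, hz2⟩ := goodCodes_nonempty hd
  have hz1' : z ∈ fkSet (bv j) := hz1 _ (Finset.mem_singleton_self _)
  have hz2' : z ∉ fkSet (bv j') := hz2 _ (Finset.mem_singleton_self _)
  have hsub : ICode (Encodable.encode z) ⊆ symmDiff (eSet (bv j)) (eSet (bv j')) := by
    intro x hx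
    rw [Set.mem_symmDiff]
    left
    refine ⟨ICode_subset_eSet hz1' hx, fun hmem => ?_⟩
    have : x ∈ ICode (Encodable.encode z) ∩ eSet (bv j') := ⟨hx, hmem⟩
    rw [ICode_inter_eSet hz2'] at this
    exact this
  intro h0
  exact volume_ICode _ (measure_mono_null hsub h0)

lemma mk_Lset_ge : Cardinal.aleph 1 ≤ Cardinal.mk Lset := by
  rw [← mk_Jt]
  have hinj : Function.Injective (fun j : Jt => (⟨evalM (.var (Sum.inl j)), ⟨_, rfl⟩⟩ : Lset)) := by
    intro j j' h
    by_contra hne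
    have h2 : evalM (.var (Sum.inl j)) = evalM (.var (Sum.inl j')) := congrArg Subtype.val h
    rw [evalM_eq_mk, evalM_eq_mk, MAlgI.mk_eq_mk] at h2
    exact eSet_ne hne h2
  exact Cardinal.mk_le_of_injective hinj

lemma mk_Lset : Cardinal.mk Lset = Cardinal.aleph 1 := le_antisymm mk_Lset_le mk_Lset_ge


/-! #### `a ∉ L` -/

def Sset : Set ℝ := Ioc (4⁻¹:ℝ) 2⁻¹ ∪ Ioc (2⁻¹ + 4⁻¹ : ℝ) 1

lemma Sset_subset_Ioc : Sset ⊆ Ioc (0:ℝ) 1 := by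
  rintro x (hx | hx)
  · exact ⟨lt_trans (by norm_num) hx.1, le_trans hx.2 (by norm_num)⟩
  · exact ⟨lt_trans (by norm_num) hx.1, hx.2⟩

lemma gI_inter_Sset (i : Idx) : (gI i : Set ℝ) ∩ Sset = ∅ := by
  apply Set.eq_empty_iff_forall_notMem.mpr
  rintro x ⟨hx1, hx2⟩
  match i with
  | Sum.inl j =>
      have h1 := (eSet_subset (bv j) hx1).2
      rcases hx2 with hx | hx
      · linarith [hx.1]
      · linarith [hx.1]
  | Sum.inr j =>
      have h1 := (fSet_subset (bv j) hx1).1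
      have h2 := (fSet_subset (bv j) hx1).2
      rcases hx2 with hx | hx
      · linarith [hx.2]
      · linarith [hx.1]

lemma trace_dichotomy (e : BExpr) :
    volume ((evalI e : Set ℝ) ∩ Sset) = 0 ∨ volume (Sset \ (evalI e : Set ℝ)) = 0 := by
  induction e with
  | var i =>
      left
      show volume ((gI i : Set ℝ) ∩ Sset) = 0
      rw [gI_inter_Sset]
      exact measure_empty
  | bot =>
      left
      show volume ((∅ : Set ℝ) ∩ Sset) = 0
      rw [Set.empty_inter]
      exact measure_empty
  | top =>
      right
      show volume (Sset \ Ioc (0:ℝ) 1) = 0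
      rw [Set.diff_eq_empty.mpr Sset_subset_Ioc]
      exact measure_empty
  | sup e₁ e₂ ih₁ ih₂ =>
      rcases ih₁ with h₁ | h₁
      · rcases ih₂ with h₂ | h₂
        · left
          show volume (((evalI e₁ : Set ℝ) ∪ (evalI e₂ : Set ℝ)) ∩ Sset) = 0
          rw [Set.union_inter_distrib_right]
          exact measure_union_null h₁ h₂
        · right
          refine measure_mono_null ?_ h₂
          intro x hx
          exact ⟨hx.1, fun hc => hx.2 (Or.inr hc)⟩
      · right
        refine measure_mono_null ?_ h₁
        intro x hx
        exact ⟨hx.1, fun hc => hx.2 (Or.inl hc)⟩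
  | inf e₁ e₂ ih₁ ih₂ =>
      rcases ih₁ with h₁ | h₁
      · left
        refine measure_mono_null ?_ h₁
        intro x hx
        exact ⟨hx.1.1, hx.2⟩
      · rcases ih₂ with h₂ | h₂
        · left
          refine measure_mono_null ?_ h₂
          intro x hx
          exact ⟨hx.1.2, hx.2⟩
        · right
          refine measure_mono_null ?_ (measure_union_null h₁ h₂)
          intro x hx
          by_cases hm : x ∈ (evalI e₁ : Set ℝ)
          · exact Or.inr ⟨hx.1, fun hc => hx.2 ⟨hm, hc⟩⟩
          · exact Or.inl ⟨hx.1, hm⟩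
  | compl e ih =>
      rcases ih with h | h
      · right
        refine measure_mono_null ?_ h
        intro x hx
        have hIoc : x ∈ Ioc (0:ℝ) 1 := Sset_subset_Ioc hx.1
        show x ∈ (evalI e : Set ℝ) ∩ Sset
        by_contra hc
        exact hx.2 ⟨hIoc, fun hm => hc ⟨hm, hx.1⟩⟩
      · left
        refine measure_mono_null ?_ h
        rintro x ⟨⟨_, hx2⟩, hx3⟩
        exact ⟨hx3, hx2⟩

lemma volume_S1 : volume (Ioc (4⁻¹:ℝ) 2⁻¹) ≠ 0 := by
  rw [Real.volume_Ioc]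
  simp only [ne_eq, ENNReal.ofReal_eq_zero, not_le]
  norm_num

lemma volume_S2 : volume (Ioc (2⁻¹ + 4⁻¹:ℝ) 1) ≠ 0 := by
  rw [Real.volume_Ioc]
  simp only [ne_eq, ENNReal.ofReal_eq_zero, not_le]
  norm_num

lemma aM_notMem_Lset : aM ∉ Lset := by
  rintro ⟨e, he⟩
  have h0 : volume (symmDiff (evalI e : Set ℝ) (aI : Set ℝ)) = 0 := by
    rw [← MAlgI.mk_eq_mk]
    exact (evalM_eq_mk e).symm.trans he
  rcases trace_dichotomy e with h | h
  · -- then `S₁ = aI ∩ S` would be null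
    apply volume_S1
    have hsub : Ioc (4⁻¹:ℝ) 2⁻¹ ⊆
        symmDiff (evalI e : Set ℝ) (aI : Set ℝ) ∪ ((evalI e : Set ℝ) ∩ Sset) := by
      intro x hx
      have hxa : x ∈ (aI : Set ℝ) := ⟨lt_trans (by norm_num) hx.1, hx.2⟩
      have hxS : x ∈ Sset := Or.inl hx
      by_cases hm : x ∈ (evalI e : Set ℝ)
      · exact Or.inr ⟨hm, hxS⟩
      · exact Or.inl (Set.mem_symmDiff.mpr (Or.inr ⟨hxa, hm⟩))
    exact measure_mono_null hsub (measure_union_null h0 h)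
  · apply volume_S2
    have hsub : Ioc (2⁻¹ + 4⁻¹:ℝ) 1 ⊆
        symmDiff (evalI e : Set ℝ) (aI : Set ℝ) ∪ (Sset \ (evalI e : Set ℝ)) := by
      intro x hx
      have hxa : x ∉ (aI : Set ℝ) := by
        intro hc
        have := hc.2
        have := hx.1
        norm_num at this ⊢
        linarith
      have hxS : x ∈ Sset := Or.inr hx
      by_cases hm : x ∈ (evalI e : Set ℝ)
      · exact Or.inl (Set.mem_symmDiff.mpr (Or.inl ⟨hm, hxa⟩))
      · exact Or.inr ⟨hxS, hm⟩
    exact measure_mono_null hsub (measure_union_null h0 h)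


/-! #### the non-extension argument -/

lemma inf_e_a (j : Jt) :
    MAlgI.inf (evalM (.var (Sum.inl j))) aM = evalM (.var (Sum.inl j)) := by
  show MAlgI.mk ((gI (Sum.inl j)).iinf aI) = MAlgI.mk (gI (Sum.inl j))
  refine congrArg MAlgI.mk (ISet.ext ?_)
  show eSet (bv j) ∩ Ioc (0:ℝ) 2⁻¹ = eSet (bv j)
  apply Set.inter_eq_left.mpr
  intro x hx
  exact ⟨(eSet_subset _ hx).1, le_trans (eSet_subset _ hx).2 (by norm_num)⟩

lemma inf_f_a (j : Jt) :
    MAlgI.inf (evalM (.var (Sum.inr j))) aM = MAlgI.bot := by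
  show MAlgI.mk ((gI (Sum.inr j)).iinf aI) = MAlgI.mk ISet.ibot
  refine congrArg MAlgI.mk (ISet.ext ?_)
  show fSet (bv j) ∩ Ioc (0:ℝ) 2⁻¹ = ∅
  apply Set.eq_empty_iff_forall_notMem.mpr
  rintro x ⟨hx1, hx2⟩
  have := (fSet_subset _ hx1).1
  have := hx2.2
  linarith

lemma phi_var_inl (j : Jt) :
    phi (evalM (.var (Sum.inl j))) = PFin.mk (Dset (bv j)) :=
  (phi_evalM _).trans (evalP_eq_mk _)

lemma phi_var_inr (j : Jt) :
    phi (evalM (.var (Sum.inr j))) = PFin.mk (Cset (bv j)) :=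
  (phi_evalM _).trans (evalP_eq_mk _)

lemma no_extension :
    ¬ ∃ ψ : MAlgI → PFin ℕ, (∀ b ∈ Lset, ψ b = phi b) ∧
      IsEmbeddingOn (genBy (insert aM Lset)) ψ := by
  rintro ⟨ψ, hagree, hemb⟩
  have haG : aM ∈ genBy (insert aM Lset) := by
    intro T hT
    exact hT.2 (Set.mem_insert _ _)
  have hLG : ∀ c ∈ Lset, c ∈ genBy (insert aM Lset) := by
    intro c hc T hT
    exact hT.2 (Set.mem_insert_of_mem _ hc)
  obtain ⟨X, hXmk'⟩ := Quotient.exists_rep (ψ aM)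
  have hXmk : PFin.mk X = ψ aM := hXmk'
  -- the `A`-sets are almost inside `X`
  have hAfin : ∀ j : Jt, (Aset (bv j) \ X).Finite := by
    intro j
    have hmem : evalM (.var (Sum.inl j)) ∈ Lset := ⟨_, rfl⟩
    have h1 : ψ (MAlgI.inf (evalM (.var (Sum.inl j))) aM) =
        PFin.inf (ψ (evalM (.var (Sum.inl j)))) (ψ aM) :=
      hemb.map_inf _ (hLG _ hmem) _ haG
    rw [inf_e_a j, hagree _ hmem, phi_var_inl j, ← hXmk, PFin.inf_mk] at h1
    have h2 := PFin.mk_eq_mk.mp h1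
    refine h2.subset ?_
    rintro k ⟨hk1, hk2⟩
    rw [Set.mem_symmDiff]
    exact Or.inl ⟨Or.inl hk1, fun hc => hk2 hc.2⟩
  -- the `B`-sets are almost disjoint from `X`
  have hBfin : ∀ j : Jt, (Bset (bv j) ∩ X).Finite := by
    intro j
    have hmem : evalM (.var (Sum.inr j)) ∈ Lset := ⟨_, rfl⟩
    have h1 : ψ (MAlgI.inf (evalM (.var (Sum.inr j))) aM) =
        PFin.inf (ψ (evalM (.var (Sum.inr j)))) (ψ aM) :=
      hemb.map_inf _ (hLG _ hmem) _ haG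
    rw [inf_f_a j, hemb.map_bot, hagree _ hmem, phi_var_inr j, ← hXmk, PFin.inf_mk] at h1
    rw [show PFin.bot = PFin.mk (∅ : Set ℕ) from rfl] at h1
    have h2 := PFin.mk_eq_mk.mp h1
    refine h2.subset ?_
    rintro k ⟨hk1, hk2⟩
    rw [Set.mem_symmDiff]
    exact Or.inr ⟨⟨Or.inl hk1, hk2⟩, fun hc => hc⟩
  -- a bound for the finite discrepancies
  set nB : Jt → ℕ :=
    fun j => (hAfin j).toFinset.sup id + (hBfin j).toFinset.sup id + 1 with hnB
  have hboundA : ∀ j k, k ∈ Aset (bv j) \ X → k < nB j := by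
    intro j k hk
    have h1 : k ∈ (hAfin j).toFinset := (hAfin j).mem_toFinset.mpr hk
    have h2 := Finset.le_sup (f := id) h1
    simp only [id] at h2
    simp only [hnB]
    omega
  have hboundB : ∀ j k, k ∈ Bset (bv j) ∩ X → k < nB j := by
    intro j k hk
    have h1 : k ∈ (hBfin j).toFinset := (hBfin j).mem_toFinset.mpr hk
    have h2 := Finset.le_sup (f := id) h1
    simp only [id] at h2
    simp only [hnB]
    omega
  -- the finite traces
  have hfinIio : ∀ j, (Aset (bv j) ∩ Iio (nB j)).Finite :=
    fun j => (Set.finite_Iio _).subset Set.inter_subset_right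
  set trip : Jt → ℕ × Finset ℕ := fun j => (nB j, (hfinIio j).toFinset) with htripdef
  have hnoninj : ¬ Function.Injective trip := by
    intro hinj
    have h1 : Cardinal.mk Jt ≤ Cardinal.mk (ℕ × Finset ℕ) := Cardinal.mk_le_of_injective hinj
    rw [mk_Jt] at h1
    exact absurd (le_trans h1 Cardinal.mk_le_aleph0)
      (not_le.mpr Cardinal.aleph0_lt_aleph_one)
  obtain ⟨j, j', heq, hne⟩ := Function.not_injective_iff.mp hnoninj
  have hn : nB j = nB j' := congrArg Prod.fst heq
  have htraceF : (hfinIio j).toFinset = (hfinIio j').toFinset := congrArg Prod.snd heq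
  have htrace : Aset (bv j) ∩ Iio (nB j) = Aset (bv j') ∩ Iio (nB j') := by
    rw [← (hfinIio j).coe_toFinset, ← (hfinIio j').coe_toFinset, htraceF]
  -- conclude that `A_j` and `B_j'` are disjoint, contradicting the Luzin property
  have hABempty : Aset (bv j) ∩ Bset (bv j') = ∅ := by
    apply Set.eq_empty_iff_forall_notMem.mpr
    rintro k ⟨hkA, hkB⟩
    rcases Nat.lt_or_ge k (nB j) with hlt | hge
    · have h1 : k ∈ Aset (bv j') ∩ Iio (nB j') := by
        rw [← htrace]
        exact ⟨hkA, hlt⟩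
      have h2 : k ∈ Aset (bv j') ∩ Bset (bv j') := ⟨h1.1, hkB⟩
      rw [AB_self] at h2
      exact h2
    · have hkX : k ∈ X := by
        by_contra hkX
        exact absurd (hboundA j k ⟨hkA, hkX⟩) (by omega)
      have h3 := hboundB j' k ⟨hkB, hkX⟩
      rw [← hn] at h3
      omega
  have hbvne : bv j ≠ bv j' := fun hc => hne (bv_inj hc)
  obtain ⟨k, hk⟩ := AB_nonempty hbvne
  rw [hABempty] at hk
  exact hk

end
/-- there are a subalgebra `𝕃` of `ℳ` of size `ℵ₁`, an `a ∈ ℳ ∖ 𝕃` and an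
embedding `φ : 𝕃 → P(ℕ)/fin` that cannot be extended to an embedding of the algebra
generated by `𝕃 ∪ {a}`. -/
theorem extension_lemma_fails_for_aleph1 :
    ∃ (L : Set MAlgI) (a : MAlgI) (φ : MAlgI → PFin ℕ),
      IsSubalgebra L ∧ Cardinal.mk L = Cardinal.aleph 1 ∧ a ∉ L ∧
      IsEmbeddingOn L φ ∧
      ¬ ∃ ψ : MAlgI → PFin ℕ, (∀ b ∈ L, ψ b = φ b) ∧
        IsEmbeddingOn (genBy (insert a L)) ψ := by
  exact ⟨Lset, aM, phi, Lset_subalgebra, mk_Lset, aM_notMem_Lset, phi_embedding, no_extension⟩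

end Paper
end
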